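/- arXiv:2507.04474 — 7 statements merged into one kernel-verified Lean document; each statement's English description precedes it below -/
import Mathlib

section
/- Let k be a field of positive characteristic p, G a group such that every finitely generated subgroup of G embeds into GL_n(F) for some field F of characteristic p (F may depend on the subgroup). Then there exists a single field K of characteristic p such that G embeds into GL_n(K). -/
theorem myFGsup {G : Type} [Group G] {H1 H2 : Subgroup G} (h1 : H1.FG) (h2 : H2.FG) :
    (H1 ⊔ H2).FG := by
  rw [Subgroup.fg_iff] at h1 h2 ⊢
  obtain ⟨S1, hS1, hf1⟩ := h1
  obtain ⟨S2, hS2, hf2⟩ := h2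
  exact ⟨S1 ∪ S2, by rw [Subgroup.closure_union, hS1, hS2], hf1.union hf2⟩



/-- Mal'cev: if every finitely generated subgroup of `G` embeds into `GLₙ(F)` for some
field `F` of characteristic `p > 0` (depending on the subgroup), then there is a single
field `K` of characteristic `p` such that `G` embeds into `GLₙ(K)`. -/
theorem stmt5 (p n : ℕ) (hp : p.Prime) (G : Type) [Group G]
    (h : ∀ H : Subgroup G, Group.FG H →
      ∃ (F : Type) (_ : Field F) (_ : CharP F p) (φ : H →* GL (Fin n) F),
        Function.Injective φ) :
    ∃ (K : Type) (_ : Field K) (_ : CharP K p) (φ : G →* GL (Fin n) K),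
      Function.Injective φ := by
  classical
  let ι := {H : Subgroup G // H.FG}
  have h' : ∀ i : ι,
      ∃ (F : Type) (_ : Field F) (_ : CharP F p) (φ : i.1 →* GL (Fin n) F),
        Function.Injective φ :=
    fun i => h i.1 ((Group.fg_iff_subgroup_fg i.1).2 i.2)
  choose F fF cF φ hφ using h'
  letI : ∀ i, Field (F i) := fF
  haveI : ∀ i, CharP (F i) p := cF
  letI : SemilatticeSup ι := Subtype.semilatticeSup fun {H1 H2} h1 h2 => myFGsup h1 h2
  haveI : Nonempty ι := ⟨⟨⊥, ⟨∅, by simp⟩⟩⟩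
  let U : Ultrafilter ι := Ultrafilter.of Filter.atTop
  have hU : ∀ i0 : ι, {i | i0 ≤ i} ∈ U := fun i0 =>
    Ultrafilter.of_le Filter.atTop (Filter.mem_atTop i0)
  -- every element of G eventually lies in i
  have hUg : ∀ S : Set G, S.Finite → {i : ι | S ⊆ (i.1 : Set G)} ∈ U := by
    intro S hS
    refine Filter.mem_of_superset (hU ⟨Subgroup.closure S, (Subgroup.fg_iff _).2 ⟨S, rfl, hS⟩⟩) ?_
    intro i hi x hx
    exact hi (Subgroup.subset_closure hx)
  -- the ultraproduct ring
  let R := ∀ i, F i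
  let m : Ideal R :=
    { carrier := {f | {i | f i = 0} ∈ U}
      zero_mem' := Filter.univ_mem' fun i => rfl
      add_mem' := fun {a b} ha hb => by
        refine Filter.mem_of_superset (Filter.inter_mem ha hb) ?_
        rintro i ⟨h1, h2⟩
        have h1' : a i = 0 := h1
        have h2' : b i = 0 := h2
        show a i + b i = 0
        rw [h1', h2', add_zero]
      smul_mem' := fun c f hf => by
        refine Filter.mem_of_superset hf ?_
        intro i hi
        have hi' : f i = 0 := hi
        show c i * f i = 0
        rw [hi', mul_zero] }
  have mem_m : ∀ f : R, f ∈ m ↔ {i | f i = 0} ∈ U := fun f => Iff.rfl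
  have hmax : m.IsMaximal := by
    rw [Ideal.isMaximal_iff]
    constructor
    · intro h1
      rw [mem_m] at h1
      have he : {i : ι | (1 : R) i = 0} = ∅ := by
        ext i
        simp only [Set.mem_setOf_eq, Set.mem_empty_iff_false, iff_false]
        exact one_ne_zero (α := F i)
      rw [he] at h1
      exact (Filter.empty_notMem (U : Filter ι)) h1
    · intro J x hmJ hxm hxJ
      have hc : {i | x i = 0}ᶜ ∈ U := Ultrafilter.compl_mem_iff_notMem.2 hxm
      set y : R := fun i => (x i)⁻¹ with hy
      have hxy : x * y - 1 ∈ m := by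
        rw [mem_m]
        refine Filter.mem_of_superset hc ?_
        intro i hi
        simp only [Set.mem_compl_iff, Set.mem_setOf_eq] at hi ⊢
        show x i * (x i)⁻¹ - 1 = 0
        rw [mul_inv_cancel₀ hi, sub_self]
      have : (1 : R) = x * y - (x * y - 1) := by ring
      rw [this]
      exact J.sub_mem (J.mul_mem_right y hxJ) (hmJ hxy)
  haveI := hmax
  let K := R ⧸ m
  letI fieldK : Field K := Ideal.Quotient.field m
  -- characteristic p
  have hpR : (p : R) = 0 := funext fun i => by
    show (p : F i) = 0
    exact CharP.cast_eq_zero (F i) p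
  have hpK : (p : K) = 0 := by
    rw [show ((p : K)) = Ideal.Quotient.mk m (p : R) from (map_natCast _ p).symm, hpR, map_zero]
  haveI charK : CharP K p := by
    have hrc : ringChar K = p := CharP.ringChar_of_prime_eq_zero hp hpK
    exact hrc ▸ ringChar.charP K
  -- the matrices
  let π : Matrix (Fin n) (Fin n) R →+* Matrix (Fin n) (Fin n) K :=
    (Ideal.Quotient.mk m).mapMatrix
  let a : ∀ _ : G, ∀ i : ι, Matrix (Fin n) (Fin n) (F i) := fun g i =>
    if hg : g ∈ i.1 then ((φ i ⟨g, hg⟩ : GL (Fin n) (F i)) : Matrix (Fin n) (Fin n) (F i)) else 1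
  let b : ∀ _ : G, ∀ i : ι, Matrix (Fin n) (Fin n) (F i) := fun g i =>
    if hg : g ∈ i.1 then (((φ i ⟨g, hg⟩)⁻¹ : GL (Fin n) (F i)) : Matrix (Fin n) (Fin n) (F i))
    else 1
  let A : G → Matrix (Fin n) (Fin n) R := fun g => Matrix.of fun r c i => a g i r c
  let B : G → Matrix (Fin n) (Fin n) R := fun g => Matrix.of fun r c i => b g i r c
  have key : ∀ M N : Matrix (Fin n) (Fin n) R, {i | ∀ r c, M r c i = N r c i} ∈ U →
      π M = π N := by
    intro M N hMN
    ext r c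
    show Ideal.Quotient.mk m (M r c) = Ideal.Quotient.mk m (N r c)
    rw [Ideal.Quotient.eq]
    rw [mem_m]
    refine Filter.mem_of_superset hMN fun i hi => ?_
    show M r c i - N r c i = 0
    rw [hi r c, sub_self]
  have mulA : ∀ (M N : Matrix (Fin n) (Fin n) R) (r c : Fin n) (i : ι),
      (M * N) r c i = (∑ k, M r k * N k c) i := fun M N r c i => by
    rw [Matrix.mul_apply]
  have one_apply : ∀ (r c : Fin n) (i : ι),
      (1 : Matrix (Fin n) (Fin n) R) r c i = (1 : Matrix (Fin n) (Fin n) (F i)) r c := by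
    intro r c i
    by_cases hrc : r = c <;> simp [Matrix.one_apply, hrc] <;> rfl
  -- A is eventually multiplicative
  have hmul : ∀ g h' : G, π (A (g * h')) = π (A g) * π (A h') := by
    intro g h'
    rw [← map_mul]
    apply key
    refine Filter.mem_of_superset (hUg {g, h'} (Set.toFinite _)) fun i hi r c => ?_
    have hg : g ∈ i.1 := hi (by simp)
    have hh : h' ∈ i.1 := hi (by simp)
    have hgh : g * h' ∈ i.1 := mul_mem hg hh
    have hai : a (g * h') i = a g i * a h' i := by
      simp only [a, dif_pos hg, dif_pos hh, dif_pos hgh]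
      rw [show (⟨g * h', hgh⟩ : i.1) = ⟨g, hg⟩ * ⟨h', hh⟩ from rfl, map_mul]
      rfl
    show a (g * h') i r c = (A g * A h') r c i
    rw [mulA, Finset.sum_apply, hai, Matrix.mul_apply]
    rfl
  have hAB : ∀ g : G, π (A g) * π (B g) = 1 := by
    intro g
    rw [← map_mul, ← map_one π]
    apply key
    refine Filter.mem_of_superset (hUg {g} (Set.toFinite _)) fun i hi r c => ?_
    have hg : g ∈ i.1 := hi (by simp)
    have hab : a g i * b g i = 1 := by
      simp only [a, b, dif_pos hg]
      rw [← Units.val_mul, mul_inv_cancel, Units.val_one]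
    show (A g * B g) r c i = (1 : Matrix (Fin n) (Fin n) R) r c i
    rw [mulA, Finset.sum_apply, one_apply r c i, ← hab, Matrix.mul_apply]
    rfl
  have hBA : ∀ g : G, π (B g) * π (A g) = 1 := by
    intro g
    rw [← map_mul, ← map_one π]
    apply key
    refine Filter.mem_of_superset (hUg {g} (Set.toFinite _)) fun i hi r c => ?_
    have hg : g ∈ i.1 := hi (by simp)
    have hab : b g i * a g i = 1 := by
      simp only [a, b, dif_pos hg]
      rw [← Units.val_mul, inv_mul_cancel, Units.val_one]
    show (B g * A g) r c i = (1 : Matrix (Fin n) (Fin n) R) r c i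
    rw [mulA, Finset.sum_apply, one_apply r c i, ← hab, Matrix.mul_apply]
    rfl
  let Φ : G →* GL (Fin n) K :=
    MonoidHom.mk' (fun g => ⟨π (A g), π (B g), hAB g, hBA g⟩) fun g h' =>
      Units.ext (hmul g h')
  refine ⟨K, fieldK, charK, Φ, (injective_iff_map_eq_one Φ).2 ?_⟩
  intro g hg1
  have hval : π (A g) = 1 := congrArg Units.val hg1
  have hentry : ∀ r c : Fin n,
      {i : ι | A g r c i = (1 : Matrix (Fin n) (Fin n) R) r c i} ∈ U := by
    intro r c
    have h1 : Ideal.Quotient.mk m (A g r c) = Ideal.Quotient.mk m ((1 : Matrix (Fin n) (Fin n) R) r c) := by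
      have := congrArg (fun M => M r c) hval
      simpa [π, RingHom.mapMatrix_apply, Matrix.map_apply, Matrix.one_apply] using this
    have h2 := Ideal.Quotient.eq.1 h1
    rw [mem_m] at h2
    refine Filter.mem_of_superset h2 fun i hi => ?_
    have hi' : A g r c i - (1 : Matrix (Fin n) (Fin n) R) r c i = 0 := hi
    exact sub_eq_zero.1 hi'
  have hS : ({i : ι | g ∈ i.1} ∩ ⋂ r : Fin n, ⋂ c : Fin n,
      {i : ι | A g r c i = (1 : Matrix (Fin n) (Fin n) R) r c i}) ∈ U := by
    refine Filter.inter_mem ?_ ?_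
    · refine Filter.mem_of_superset (hUg {g} (Set.toFinite _)) fun i hi => hi (by simp)
    · rw [Filter.iInter_mem]
      intro r
      rw [Filter.iInter_mem]
      exact fun c => hentry r c
  obtain ⟨i, hgi, hone⟩ := Filter.nonempty_of_mem hS
  simp only [Set.mem_iInter, Set.mem_setOf_eq] at hone
  have hmat : ((φ i ⟨g, hgi⟩ : GL (Fin n) (F i)) : Matrix (Fin n) (Fin n) (F i)) = 1 := by
    ext r c
    have h1 : a g i r c = (1 : Matrix (Fin n) (Fin n) (F i)) r c := by
      rw [show a g i r c = A g r c i from rfl, hone r c, one_apply]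
    have ha : a g i = ((φ i ⟨g, hgi⟩ : GL (Fin n) (F i)) : Matrix (Fin n) (Fin n) (F i)) :=
      dif_pos hgi
    rw [ha] at h1
    simpa using h1
  have : φ i ⟨g, hgi⟩ = 1 := Units.ext (by rw [hmat]; rfl)
  have hg1' : (⟨g, hgi⟩ : i.1) = 1 := hφ i (by rw [this, map_one])
  exact congrArg Subtype.val hg1'
end

section
/- Let K be a field and φ : G → GL_n(K) an injective group homomorphism. If G_1 ⊊ G_2 ⊊ G_3 ⊊ ... is a strictly ascending chain of subgroups of G, then the centralizers Z_j = {u ∈ GL_n(K) : u φ(g) = φ(g) u for all g ∈ G_j} cannot form a strictly descending infinite chain of Zariski-closed subsets; consequently there is no element f_i ∈ G for each i with f_i commuting with all of G_j exactly when j ≤ i. -/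
/-- The centralizer of `φ (Gs j)` inside the matrix algebra, as a submodule. -/
def centSubmodule (K : Type) [Field K] (n : ℕ) (G : Type) [Group G]
    (φ : G →* GL (Fin n) K) (Gs : ℕ → Subgroup G) (j : ℕ) :
    Submodule K (Matrix (Fin n) (Fin n) K) where
  carrier := {x | ∀ g ∈ Gs j, x * (φ g : Matrix (Fin n) (Fin n) K) = (φ g : Matrix (Fin n) (Fin n) K) * x}
  add_mem' := by
    intro a b ha hb g hg
    simp [add_mul, mul_add, ha g hg, hb g hg]
  zero_mem' := by intro g hg; simp
  smul_mem' := by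
    intro c x hx g hg
    simp [Matrix.smul_mul, Matrix.mul_smul, hx g hg]

theorem centSubmodule_no_chain (K : Type) [Field K] (n : ℕ) (G : Type) [Group G]
    (φ : G →* GL (Fin n) K) (Gs : ℕ → Subgroup G) (hGs : StrictMono Gs)
    (h : ∀ j : ℕ, ∃ x, x ∈ centSubmodule K n G φ Gs j ∧ x ∉ centSubmodule K n G φ Gs (j + 1)) :
    False := by
  have hanti : ∀ j : ℕ, centSubmodule K n G φ Gs (j + 1) ≤ centSubmodule K n G φ Gs j := by
    intro j x hx g hg
    exact hx g ((hGs.monotone (Nat.le_succ j)) hg)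
  have hlt : ∀ j : ℕ, centSubmodule K n G φ Gs (j + 1) < centSubmodule K n G φ Gs j := by
    intro j
    obtain ⟨x, hx, hx'⟩ := h j
    exact lt_of_le_of_ne (hanti j) (fun e => hx' (e ▸ hx))
  have hfin : ∀ j : ℕ, Module.finrank K (centSubmodule K n G φ Gs (j + 1)) <
      Module.finrank K (centSubmodule K n G φ Gs j) := by
    intro j
    exact Submodule.finrank_lt_finrank_of_lt (hlt j)
  have hsum : ∀ k : ℕ, Module.finrank K (centSubmodule K n G φ Gs k) + k ≤
      Module.finrank K (centSubmodule K n G φ Gs 0) := by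
    intro k
    induction k with
    | zero => simp
    | succ k ih => have := hfin k; omega
  have := hsum (Module.finrank K (centSubmodule K n G φ Gs 0) + 1)
  omega

/-- Given an injective `φ : G →* GLₙ(K)` and a strictly ascending chain of subgroups
`G₁ ⊊ G₂ ⊊ ⋯`, the centralizers `Z_j = {u | u φ(g) = φ(g) u for all g ∈ G_j}` cannot form
a strictly descending chain of subsets; consequently there are no elements `f i ∈ G`
commuting with all of `G j` exactly when `j ≤ i`. -/
theorem stmt6 (K : Type) [Field K] (n : ℕ) (G : Type) [Group G]
    (φ : G →* GL (Fin n) K) (hφ : Function.Injective φ)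
    (Gs : ℕ → Subgroup G) (hGs : StrictMono Gs) :
    (¬ StrictAnti fun j => {u : GL (Fin n) K | ∀ g ∈ Gs j, u * φ g = φ g * u}) ∧
    ¬ ∃ f : ℕ → G, ∀ i j : ℕ, (∀ g ∈ Gs j, Commute (φ (f i)) (φ g)) ↔ j ≤ i := by
  constructor
  · intro hZ
    apply centSubmodule_no_chain K n G φ Gs hGs
    intro j
    have h := hZ (Nat.lt_succ_self j)
    rw [Set.lt_iff_ssubset, Set.ssubset_iff_subset_ne] at h
    obtain ⟨hsub, hne⟩ := h
    have : ∃ u : GL (Fin n) K, (∀ g ∈ Gs j, u * φ g = φ g * u) ∧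
        ¬ (∀ g ∈ Gs (j+1), u * φ g = φ g * u) := by
      by_contra hc
      push_neg at hc
      apply hne
      apply Set.Subset.antisymm hsub
      intro u hu g hg
      exact hc u hu g hg
    obtain ⟨u, hu, hu'⟩ := this
    refine ⟨(u : Matrix (Fin n) (Fin n) K), ?_, ?_⟩
    · intro g hg
      exact_mod_cast congrArg (Units.val) (hu g hg)
    · intro hx
      apply hu'
      intro g hg
      apply Units.ext
      push_cast
      exact hx g hg
  · rintro ⟨f, hf⟩
    apply centSubmodule_no_chain K n G φ Gs hGs
    intro i
    refine ⟨(φ (f i) : Matrix (Fin n) (Fin n) K), ?_, ?_⟩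
    · intro g hg
      have := (hf i i).mpr le_rfl g hg
      exact_mod_cast congrArg (Units.val) this
    · intro hx
      have : ∀ g ∈ Gs (i+1), Commute (φ (f i)) (φ g) := by
        intro g hg
        have := hx g hg
        unfold Commute SemiconjBy
        apply Units.ext
        push_cast
        exact this
      exact absurd ((hf i (i+1)).mp this) (by omega)
end

section
/- Let p be an odd prime and G a finite group that is a semidirect product N ⋊ H with N ≅ (Z/pZ)^2 and H acting transitively on the nonidentity elements of N. Then every faithful complex representation of G has dimension at least p^2 - 1. -/
/-!
Restrict a faithful representation `V` of `G` to `N`. Conjugation by `H` preserves the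
character `χ` and permutes `N ∖ {1}` transitively, so `χ` takes a single value `a` off the
identity. Character orthogonality then gives, for the trivial character and for any nontrivial
linear character `c` of `N`,
`|N| · dim Vᴺ = dim V + (|N| - 1) a` and `|N| · dim Hom_N(V, c) = dim V - a`,
so `dim V = dim Vᴺ + (|N| - 1) · dim Hom_N(V, c)`. If `Hom_N(V, c) = 0` then `a = dim V` and
`Vᴺ = V`, i.e. `N` acts trivially, contradicting faithfulness.
-/

open Module

theorem sum_mul_eq_of_forall_ne_one {G R : Type*} [One G] [Fintype G] [CommRing R]
    (w f : G → R) {a : R} (hf : ∀ g ≠ 1, f g = a) :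
    ∑ g, w g * f g = a * ∑ g, w g + w 1 * (f 1 - a) := by
  classical
  rw [← Finset.add_sum_erase _ _ (Finset.mem_univ 1),
    ← Finset.add_sum_erase _ w (Finset.mem_univ 1),
    Finset.sum_congr rfl fun g hg => by rw [hf g (Finset.ne_of_mem_erase hg)], ← Finset.sum_mul]
  ring

theorem exists_monoidHom_multiplicative_ne_one {α : Type*} [AddCommGroup α] [Finite α]
    [Nontrivial α] : ∃ c : Multiplicative α →* ℂ, c ≠ 1 := by
  obtain ⟨x, hx⟩ := exists_ne (0 : α)
  obtain ⟨ψ, hψ⟩ := AddChar.exists_apply_ne_zero.2 hx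
  exact ⟨ψ.toMonoidHom, fun h => hψ (DFunLike.congr_fun h (Multiplicative.ofAdd x))⟩

namespace Representation

variable {k G V : Type*} [Field k] [Group G] [AddCommGroup V] [Module k V]

def ofLinearChar (c : G →* k) : Representation k G k :=
  (Algebra.lsmul k k k).toMonoidHom.comp c

@[simp]
theorem char_ofLinearChar (c : G →* k) (g : G) : (ofLinearChar c).character g = c g := by
  change LinearMap.trace k k (Algebra.lsmul k k k (c g)) = c g
  rw [show Algebra.lsmul k k k (c g) = c g • LinearMap.id from LinearMap.ext fun _ => rfl]
  simp

theorem char_inl_eq_of_aut_apply {N H : Type*} [Group N] [Group H] {φ : H →* MulAut N}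
    (ρ : Representation k (N ⋊[φ] H) V) {x y : N} {h : H} (hxy : φ h x = y) :
    ρ.character (.inl y) = ρ.character (.inl x) := by
  rw [← hxy, SemidirectProduct.inl_aut, map_inv, char_conj]

theorem invariants_ne_top_of_injective [Nontrivial G] {ρ : Representation k G V}
    (hρ : Function.Injective ρ) : ρ.invariants ≠ ⊤ := by
  intro htop
  obtain ⟨g, hg⟩ := exists_ne (1 : G)
  refine hg (hρ (LinearMap.ext fun v => ?_))
  rw [map_one, Module.End.one_apply]
  exact (mem_invariants ρ v).1 (htop ▸ Submodule.mem_top) g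

section ConstantCharacter

variable [CharZero k] [Fintype G] [FiniteDimensional k V] (ρ : Representation k G V) {a : k}

theorem card_mul_finrank_invariants_of_char_eq (hχ : ∀ g ≠ 1, ρ.character g = a) :
    (Nat.card G : k) * finrank k ρ.invariants = finrank k V + (Nat.card G - 1) * a := by
  have : Invertible (Nat.card G : k) :=
    invertibleOfNonzero (Nat.cast_ne_zero.2 Nat.card_pos.ne')
  rw [← ρ.card_inv_mul_sum_char_eq_finrank, mul_inv_cancel_left₀ (Invertible.ne_zero _)]
  have h := sum_mul_eq_of_forall_ne_one (fun _ => (1 : k)) ρ.character hχ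
  simp only [one_mul, Finset.sum_const, Finset.card_univ, nsmul_eq_mul, mul_one, char_one,
    Fintype.card_eq_nat_card] at h
  rw [h]
  ring

theorem card_mul_finrank_intertwiningMap_ofLinearChar_of_char_eq
    (hχ : ∀ g ≠ 1, ρ.character g = a) {c : G →* k} (hc : c ≠ 1) :
    (Nat.card G : k) * finrank k (ρ.IntertwiningMap (ofLinearChar c)) = finrank k V - a := by
  have : Invertible (Nat.card G : k) :=
    invertibleOfNonzero (Nat.cast_ne_zero.2 Nat.card_pos.ne')
  rw [← ρ.card_inv_mul_sum_char_mul_char_eq_finrank,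
    mul_inv_cancel_left₀ (Invertible.ne_zero _)]
  have h := sum_mul_eq_of_forall_ne_one c (fun g => ρ.character g⁻¹) (a := a)
    fun g hg => hχ _ (inv_ne_one.2 hg)
  simpa [sum_hom_units_eq_zero c hc] using h

theorem finrank_eq_finrank_invariants_add_of_char_eq (hχ : ∀ g ≠ 1, ρ.character g = a)
    {c : G →* k} (hc : c ≠ 1) :
    finrank k V = finrank k ρ.invariants +
      (Nat.card G - 1) * finrank k (ρ.IntertwiningMap (ofLinearChar c)) := by
  have h₀ := card_mul_finrank_invariants_of_char_eq ρ hχ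
  have h₁ := card_mul_finrank_intertwiningMap_ofLinearChar_of_char_eq ρ hχ hc
  rw [← Nat.cast_inj (R := k), Nat.cast_add, Nat.cast_mul, Nat.cast_sub Nat.card_pos,
    Nat.cast_one]
  refine mul_left_cancel₀ (Nat.cast_ne_zero.2 (Nat.card_pos (α := G)).ne') ?_
  linear_combination -h₀ - (Nat.card G - 1 : k) * h₁

theorem finrank_intertwiningMap_ofLinearChar_ne_zero_of_char_eq
    (hχ : ∀ g ≠ 1, ρ.character g = a) (hρ : Function.Injective ρ) {c : G →* k}
    (hc : c ≠ 1) : finrank k (ρ.IntertwiningMap (ofLinearChar c)) ≠ 0 := by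
  have : Nontrivial G := by
    by_contra! hG
    exact hc (MonoidHom.ext fun g => by rw [Subsingleton.elim g 1, map_one, MonoidHom.one_apply])
  intro hzero
  have h₀ := card_mul_finrank_invariants_of_char_eq ρ hχ
  have h₁ := card_mul_finrank_intertwiningMap_ofLinearChar_of_char_eq ρ hχ hc
  rw [hzero, Nat.cast_zero, mul_zero, eq_comm, sub_eq_zero] at h₁
  refine invariants_ne_top_of_injective hρ (Submodule.eq_top_of_finrank_eq ?_)
  refine Nat.cast_injective (R := k)
    (mul_left_cancel₀ (Nat.cast_ne_zero.2 (Nat.card_pos (α := G)).ne') ?_)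
  rw [h₀, ← h₁]
  ring

theorem card_sub_one_le_finrank_of_char_eq (hχ : ∀ g ≠ 1, ρ.character g = a)
    (hρ : Function.Injective ρ) {c : G →* k} (hc : c ≠ 1) :
    Nat.card G - 1 ≤ finrank k V := by
  rw [finrank_eq_finrank_invariants_add_of_char_eq ρ hχ hc]
  exact le_add_left (Nat.le_mul_of_pos_right _
    (Nat.pos_of_ne_zero (finrank_intertwiningMap_ofLinearChar_ne_zero_of_char_eq ρ hχ hρ hc)))

end ConstantCharacter

end Representation

theorem stmt9_general (p : ℕ)
    (H : Type) [Group H]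
    (φ : H →* MulAut (Multiplicative (ZMod p × ZMod p)))
    (htrans : ∀ x y : Multiplicative (ZMod p × ZMod p),
      x ≠ 1 → y ≠ 1 → ∃ h : H, φ h x = y)
    (m : ℕ) (ρ : (Multiplicative (ZMod p × ZMod p) ⋊[φ] H) →* GL (Fin m) ℂ)
    (hρ : Function.Injective ρ) :
    p ^ 2 - 1 ≤ m := by
  obtain hp | hp := Nat.lt_or_ge p 2
  · interval_cases p <;> simp
  have : Fact (1 < p) := ⟨hp⟩
  let σ : Representation ℂ _ (Fin m → ℂ) :=
    Matrix.toLinAlgEquiv'.toAlgHom.toMonoidHom.comp ((Units.coeHom _).comp ρ)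
  have hσ : Function.Injective σ :=
    Matrix.toLinAlgEquiv'.injective.comp (Units.val_injective.comp hρ)
  obtain ⟨x₀, hx₀⟩ := exists_ne (1 : Multiplicative (ZMod p × ZMod p))
  have hχ : ∀ x ≠ 1, Representation.character (σ.comp SemidirectProduct.inl) x =
      σ.character (.inl x₀) :=
    fun x hx => Representation.char_inl_eq_of_aut_apply σ (htrans x₀ x hx₀ hx).choose_spec
  obtain ⟨c, hc⟩ := exists_monoidHom_multiplicative_ne_one (α := ZMod p × ZMod p)
  simpa [Nat.card_prod, sq] using Representation.card_sub_one_le_finrank_of_char_eq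
    (σ.comp SemidirectProduct.inl) hχ (hσ.comp SemidirectProduct.inl_injective) hc

/-- Let `p` be an odd prime and `G = N ⋊ H` with `N ≅ (ℤ/pℤ)²` and `H` acting transitively
on the nonidentity elements of `N`. Then every faithful complex representation of `G` has
dimension at least `p² - 1`. -/
theorem stmt9 (p : ℕ) (hp : p.Prime) (hodd : Odd p)
    (H : Type) [Group H] [Finite H]
    (φ : H →* MulAut (Multiplicative (ZMod p × ZMod p)))
    (htrans : ∀ x y : Multiplicative (ZMod p × ZMod p),
      x ≠ 1 → y ≠ 1 → ∃ h : H, φ h x = y)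
    (m : ℕ) (ρ : (Multiplicative (ZMod p × ZMod p) ⋊[φ] H) →* GL (Fin m) ℂ)
    (hρ : Function.Injective ρ) :
    p ^ 2 - 1 ≤ m :=
  stmt9_general p H φ htrans m ρ hρ
end

section
/- Let k be a field of characteristic 0 not containing a primitive third root of unity. Then PGL_3(k) contains no subgroup isomorphic to (Z/3Z)^2. -/
/-!
Lift the nine elements of the image to matrices `g x ∈ GL₃(k)`. A commutator of two lifts is a
scalar of determinant `1`, i.e. a cube root of unity, so the lifts commute. For `x ≠ y` the matrix
`g x * (g y)⁻¹` is not scalar but its cube is; without primitive cube roots of unity its minimal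
polynomial can only be `X ^ 3 - c`, so its trace vanishes. As `trace 1 = 3 ≠ 0`, the trace pairing
makes the nine lifts linearly independent, hence a basis of `M₃(k)`. A lift commuting with a basis
is central, so the map to `PGL₃(k)` is trivial.
-/

open Polynomial Matrix
open scoped commutatorElement

variable {k : Type*} [Field k]

theorem Polynomial.exists_eq_mul_X_sub_C_of_dvd {p q : k[X]} (hp : p.Monic) (hq : q.Monic)
    (hdvd : q ∣ p) (hdeg : p.natDegree = q.natDegree + 1) : ∃ s, p = q * (X - C s) := by
  obtain ⟨r, rfl⟩ := hdvd
  have hr : r.Monic := hq.of_mul_monic_left hp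
  have hr1 : r.natDegree = 1 := by rw [hq.natDegree_mul hr] at hdeg; omega
  exact ⟨-r.coeff 0, by rw [hr.eq_X_add_C hr1]; simp [sub_eq_add_neg]⟩

namespace Matrix

variable {n : Type*} [Fintype n] [DecidableEq n]

theorem isRoot_minpoly_of_isRoot_charpoly {M : Matrix n n k} {s : k} (hs : M.charpoly.IsRoot s) :
    (minpoly k M).IsRoot s := by
  rw [← minpoly_toLin']
  exact Module.End.isRoot_of_hasEigenvalue
    ((Module.End.hasEigenvalue_iff_isRoot_charpoly _ _).2 (by rwa [charpoly_toLin']))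

theorem trace_eq_zero_of_pow_three_eq_algebraMap [CharZero k]
    (hζ : ∀ ζ : k, ζ ^ 3 = 1 → ζ = 1) {M : Matrix (Fin 3) (Fin 3) k} {c : k} (hc : c ≠ 0)
    (hM : M ^ 3 = algebraMap k _ c) (hM' : M ∉ (algebraMap k (Matrix (Fin 3) (Fin 3) k)).range) :
    M.trace = 0 := by
  have hint : IsIntegral k M := Algebra.IsIntegral.isIntegral M
  set μ := minpoly k M
  have hμ : μ.Monic := minpoly.monic hint
  have hχ : M.charpoly.Monic := M.charpoly_monic
  have hcube : (X ^ 3 - C c : k[X]).Monic := monic_X_pow_sub_C c three_ne_zero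
  have hμ_cube : μ ∣ X ^ 3 - C c := minpoly.dvd k M (by simp [hM])
  have hμ_χ : μ ∣ M.charpoly := minpoly_dvd_charpoly M
  have hμ_le : μ.natDegree ≤ 3 := by
    simpa using natDegree_le_of_dvd hμ_χ hχ.ne_zero
  have hμ_ge : 2 ≤ μ.natDegree := (minpoly.two_le_natDegree_iff hint).2 hM'
  have cube_of_root : ∀ s, μ.IsRoot s → s ^ 3 = c := fun s hs => by
    simpa [sub_eq_zero] using (hs.dvd hμ_cube).eq_zero
  obtain hdeg | hdeg : μ.natDegree = 3 ∨ μ.natDegree = 2 := by omega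
  · have hχμ : M.charpoly = μ :=
      eq_of_monic_of_dvd_of_natDegree_le hμ hχ hμ_χ (by simp [hdeg])
    have hcubeμ : X ^ 3 - C c = μ :=
      eq_of_monic_of_dvd_of_natDegree_le hμ hcube hμ_cube (by simp [hdeg])
    rw [trace_eq_neg_charpoly_coeff, hχμ, ← hcubeμ]
    simp
  · -- An eigenvalue `s` is a root of `μ`; the other root is also a cube root of `c`, hence `s`,
    -- so `(X - C s) ^ 2` divides the separable polynomial `X ^ 3 - C c`.
    exfalso
    obtain ⟨s, hs⟩ := exists_eq_mul_X_sub_C_of_dvd hχ hμ hμ_χ (by simp [hdeg])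
    have hsμ : μ.IsRoot s := isRoot_minpoly_of_isRoot_charpoly (by simp [hs])
    obtain ⟨t, ht⟩ := exists_eq_mul_X_sub_C_of_dvd hμ (monic_X_sub_C s)
      (dvd_iff_isRoot.2 hsμ) (by simp [hdeg])
    have hts : t = s := by
      have hs3 := cube_of_root s hsμ
      have ht3 := cube_of_root t (by simp [ht])
      have hs0 : s ≠ 0 := by rintro rfl; simp [← hs3] at hc
      have := hζ (t / s) (by rw [div_pow, hs3, ht3, div_self hc])
      rwa [div_eq_one_iff_eq hs0] at this
    have hsq : (X - C s) * (X - C s) ∣ X ^ 3 - C c := by rw [hts] at ht; rwa [← ht]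
    exact not_isUnit_X_sub_C s
      ((separable_X_pow_sub_C c (by norm_num) hc).squarefree _ hsq)

namespace GeneralLinearGroup

theorem commute_of_commutatorElement_mem_center
    (hζ : ∀ ζ : k, ζ ^ Fintype.card n = 1 → ζ = 1) {g h : GL n k}
    (hgh : ⁅g, h⁆ ∈ Subgroup.center (GL n k)) : Commute g h := by
  rw [center_eq_range_scalar] at hgh
  obtain ⟨u, hu⟩ := hgh
  have hdet : det ⁅g, h⁆ = 1 := by
    rw [map_commutatorElement, commutatorElement_eq_one_iff_commute]
    exact Commute.all _ _
  have hu1 : u = 1 := Units.ext <| hζ _ <| by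
    rw [← Units.val_pow_eq_pow_val, ← det_scalar, hu, hdet, Units.val_one]
  rw [← commutatorElement_eq_one_iff_commute, ← hu, hu1, map_one]

theorem linearIndependent_of_trace_mul_inv_eq_zero {ι : Type*}
    (hn : (Fintype.card n : k) ≠ 0) (g : ι → GL n k)
    (hg : ∀ i j, i ≠ j → trace ((g i * (g j)⁻¹ : GL n k) : Matrix n n k) = 0) :
    LinearIndependent k fun i => (g i : Matrix n n k) := by
  rw [linearIndependent_iff']
  intro s c hc j hj
  have htr := congrArg (fun M => trace (M * ((g j)⁻¹ : GL n k).val)) hc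
  simp only [Finset.sum_mul, smul_mul_assoc, ← Units.val_mul, trace_sum, trace_smul, zero_mul,
    trace_zero] at htr
  rw [Finset.sum_eq_single j (fun i _ hij => by rw [hg i j hij, smul_zero]) (absurd hj),
    mul_inv_cancel, Units.val_one, trace_one, smul_eq_mul] at htr
  exact (mul_eq_zero.1 htr).resolve_right hn

theorem mem_center_of_commute_of_span_eq_top {ι : Type*} {f : ι → Matrix n n k}
    (hf : Submodule.span k (Set.range f) = ⊤) {g : GL n k}
    (hg : ∀ i, Commute (g : Matrix n n k) (f i)) : g ∈ Subgroup.center (GL n k) := by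
  have hcomm (M : Matrix n n k) : Commute (g : Matrix n n k) M := by
    have hM : M ∈ Submodule.span k (Set.range f) := hf ▸ Submodule.mem_top
    induction hM using Submodule.span_induction with
    | mem x hx => obtain ⟨i, rfl⟩ := hx; exact hg i
    | zero => exact Commute.zero_right _
    | add x y _ _ hx hy => exact hx.add_right hy
    | smul a x _ hx => exact hx.smul_right a
  exact Subgroup.mem_center_iff.2 fun h => Units.ext (hcomm h).symm.eq

theorem trace_eq_zero_of_mk_ne_one_of_mk_pow_three_eq_one [CharZero k]
    (hζ : ∀ ζ : k, ζ ^ 3 = 1 → ζ = 1) {g : GL (Fin 3) k}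
    (hg : (g : GL (Fin 3) k ⧸ Subgroup.center (GL (Fin 3) k)) ≠ 1)
    (hg3 : (g : GL (Fin 3) k ⧸ Subgroup.center (GL (Fin 3) k)) ^ 3 = 1) :
    trace (g : Matrix (Fin 3) (Fin 3) k) = 0 := by
  rw [ne_eq, QuotientGroup.eq_one_iff, mem_center_iff_val_mem_range_scalar] at hg
  rw [← QuotientGroup.mk_pow, QuotientGroup.eq_one_iff, center_eq_range_scalar] at hg3
  obtain ⟨u, hu⟩ := hg3
  refine trace_eq_zero_of_pow_three_eq_algebraMap hζ u.ne_zero ?_ hg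
  rw [← Units.val_pow_eq_pow_val, ← hu]
  rfl

theorem linearIndependent_out_of_injective [CharZero k] (hζ : ∀ ζ : k, ζ ^ 3 = 1 → ζ = 1)
    {G : Type*} [Group G] (hG : ∀ x : G, x ^ 3 = 1)
    {φ : G →* GL (Fin 3) k ⧸ Subgroup.center (GL (Fin 3) k)} (hφ : Function.Injective φ) :
    LinearIndependent k fun x => ((φ x).out : Matrix (Fin 3) (Fin 3) k) := by
  refine linearIndependent_of_trace_mul_inv_eq_zero (by simp) _ fun x y hxy => ?_
  have hmk : ((φ x).out * (φ y).out⁻¹ : GL (Fin 3) k ⧸ _) = φ (x * y⁻¹) := by simp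
  refine trace_eq_zero_of_mk_ne_one_of_mk_pow_three_eq_one hζ ?_ ?_
  · rw [hmk, ← φ.map_one, hφ.ne_iff, ne_eq, mul_inv_eq_one]
    exact hxy
  · rw [hmk, ← map_pow, hG, map_one]

theorem eq_one_of_span_out_eq_top (hζ : ∀ ζ : k, ζ ^ Fintype.card n = 1 → ζ = 1)
    {G : Type*} [CommGroup G] (φ : G →* GL n k ⧸ Subgroup.center (GL n k))
    (hspan : Submodule.span k (Set.range fun x => ((φ x).out : Matrix n n k)) = ⊤) (x : G) :
    φ x = 1 := by
  rw [← QuotientGroup.out_eq' (φ x), QuotientGroup.eq_one_iff]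
  refine mem_center_of_commute_of_span_eq_top hspan fun y => Commute.units_val ?_
  refine commute_of_commutatorElement_mem_center hζ ?_
  rw [← QuotientGroup.eq_one_iff, commutatorElement_def]
  simp only [QuotientGroup.mk_mul, QuotientGroup.mk_inv, QuotientGroup.out_eq']
  rw [← commutatorElement_def, ← map_commutatorElement,
    commutatorElement_eq_one_iff_commute.2 (Commute.all x y), map_one]

end GeneralLinearGroup

end Matrix

open Matrix.GeneralLinearGroup in
/-- If `k` has characteristic 0 and contains no primitive third root of unity, then
`PGL₃(k)` has no subgroup isomorphic to `(ℤ/3ℤ)²`. -/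
theorem stmt10 (k : Type) [Field k] [CharZero k]
    (h : ¬ ∃ ζ : k, ζ ^ 3 = 1 ∧ ζ ≠ 1) :
    ¬ ∃ φ : Multiplicative (ZMod 3 × ZMod 3) →*
        (GL (Fin 3) k ⧸ Subgroup.center (GL (Fin 3) k)),
      Function.Injective φ := by
  rintro ⟨φ, hφ⟩
  have hζ : ∀ ζ : k, ζ ^ 3 = 1 → ζ = 1 :=
    fun ζ hζ3 => not_not.1 fun hζ1 => h ⟨ζ, hζ3, hζ1⟩
  have hli := linearIndependent_out_of_injective hζ (by decide) hφ
  have hspan := hli.span_eq_top_of_card_eq_finrank (by simp [Module.finrank_matrix])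
  have hx := eq_one_of_span_out_eq_top (by simpa using hζ) φ hspan (.ofAdd (1, 0))
  exact absurd (hφ (hx.trans φ.map_one.symm)) (by decide)
end

section
/- SL_2(Z/4Z) is isomorphic to a semidirect product A4 ⋊ C4, where C4 is generated by a lift of a transposition under the reduction map SL_2(Z/4Z) → SL_2(Z/2Z) ≅ S3 composed appropriately; in particular SL_2(Z/4Z) is a nonsplit central extension of S4 by C2. -/
/-!
Inside `SL₂(ℤ/4ℤ)` the twelve matrices of `a4Table` form a copy of `A₄`, and the rotation
`r = !![0, 1; -1, 0]` of order 4 conjugates it the way the transposition `τ = (0 1)` conjugates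
`A₄ ⊆ S₄`. Since `48 = 12 · 4`, this gives `SL₂(ℤ/4ℤ) ≅ A₄ ⋊ C₄`, and `r` reduces mod 2 to
`!![0, 1; 1, 0]`, of order 2. The map `(a, k) ↦ a τᵏ` onto `S₄` has a kernel of order
`48 / 24 = 2`, which is central, being normal of order 2. The extension does not split: an
involution `(a, k)` has `2k = 0`, so its image is even, whereas a section would send a
transposition to an involution with odd image, since every surjective endomorphism of `S₄`
preserves the sign.
-/

open Equiv

section zmodPowHom

variable {G : Type*} [Monoid G] (n : ℕ) [NeZero n] (g : G) (hg : g ^ n = 1)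

def zmodPowHom : Multiplicative (ZMod n) →* G where
  toFun k := g ^ k.toAdd.val
  map_one' := by simp
  map_mul' a b := by
    rw [toAdd_mul, ZMod.val_add, ← pow_eq_pow_mod _ hg, pow_add]

theorem zmodPowHom_apply (k : Multiplicative (ZMod n)) :
    zmodPowHom n g hg k = g ^ k.toAdd.val := rfl

@[simp]
theorem zmodPowHom_ofAdd_one : zmodPowHom n g hg (.ofAdd 1) = g := by
  rw [zmodPowHom_apply, toAdd_ofAdd, ZMod.val_one_eq_one_mod, ← pow_eq_pow_mod _ hg, pow_one]

end zmodPowHom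

instance SemidirectProduct.instFintype {N G : Type*} [Group N] [Group G] [Fintype N] [Fintype G]
    {φ : G →* MulAut N} : Fintype (N ⋊[φ] G) :=
  Fintype.ofEquiv (N × G) SemidirectProduct.equivProd.symm

theorem Subgroup.le_center_of_card_eq_two {G : Type*} [Group G] {N : Subgroup G} [N.Normal]
    (hN : Nat.card N = 2) : N ≤ Subgroup.center G := by
  intro n hn
  rw [Subgroup.mem_center_iff]
  intro g
  by_cases h1 : n = 1
  · simp [h1]
  obtain ⟨y, -, hy⟩ := (Nat.card_eq_two_iff' (1 : N)).mp hN
  have unique_ne_one : ∀ x : N, (x : G) ≠ 1 → x = y := fun x hx => hy x (by simpa using hx)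
  have hconj : g * n * g⁻¹ ∈ N := ‹N.Normal›.conj_mem n hn g
  have heq : (⟨g * n * g⁻¹, hconj⟩ : N) = ⟨n, hn⟩ :=
    (unique_ne_one _ (by simpa using h1)).trans (unique_ne_one _ h1).symm
  exact mul_inv_eq_iff_eq_mul.mp (congrArg Subtype.val heq)

theorem Equiv.Perm.not_surjective_comp_of_sign_eq_one {G α : Type*} [Group G] [Fintype α]
    [DecidableEq α] [Nontrivial α] (f : G →* Perm α)
    (hf : ∀ g, g * g = 1 → Perm.sign (f g) = 1) (s : Perm α →* G) :
    ¬ Function.Surjective (f.comp s) := by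
  intro hs
  obtain ⟨a, b, hab⟩ := exists_pair_ne α
  have hsign := DFunLike.congr_fun (Perm.eq_sign_of_surjective_hom
    (s := Perm.sign.comp (f.comp s)) ((Perm.sign_surjective α).comp hs)) (swap a b)
  have hinv : s (swap a b) * s (swap a b) = 1 := by rw [← map_mul, swap_mul_self, map_one]
  simp only [MonoidHom.comp_apply, hf _ hinv, Perm.sign_swap hab] at hsign
  exact absurd hsign (by decide)

namespace SL2ZMod4

local notation "SL₂ℤ₄" => Matrix.SpecialLinearGroup (Fin 2) (ZMod 4)
local notation "A₄" => alternatingGroup (Fin 4)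
local notation "S₄" => Perm (Fin 4)
local notation "C₄" => Multiplicative (ZMod 4)

def tau : S₄ := swap 0 1

def tauPow : C₄ →* S₄ := zmodPowHom 4 tau (by decide)

def tauConj : C₄ →* MulAut A₄ := MulAut.conjNormal.comp tauPow

def rot : SL₂ℤ₄ := ⟨!![0, 1; -1, 0], by decide⟩

def rotPow : C₄ →* SL₂ℤ₄ := zmodPowHom 4 rot (by decide)

-- Its Klein four-subgroup lies in the kernel of reduction mod 2. Every element of `A₄` is
-- listed, so the default value in `a4ToSL` is never used.
def a4Table : List (S₄ × SL₂ℤ₄) := [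
  (1, ⟨!![1, 0; 0, 1], by decide⟩),
  (swap 1 2 * swap 2 3, ⟨!![3, 3; 1, 0], by decide⟩),
  (swap 1 2 * swap 1 3, ⟨!![0, 1; 3, 3], by decide⟩),
  (swap 0 1 * swap 2 3, ⟨!![1, 2; 2, 1], by decide⟩),
  (swap 0 1 * swap 1 2, ⟨!![2, 3; 3, 1], by decide⟩),
  (swap 0 1 * swap 1 3, ⟨!![1, 3; 3, 2], by decide⟩),
  (swap 0 1 * swap 0 2, ⟨!![1, 1; 1, 2], by decide⟩),
  (swap 0 2 * swap 2 3, ⟨!![0, 3; 1, 3], by decide⟩),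
  (swap 0 2 * swap 1 3, ⟨!![3, 0; 2, 3], by decide⟩),
  (swap 0 1 * swap 0 3, ⟨!![2, 1; 1, 1], by decide⟩),
  (swap 0 2 * swap 0 3, ⟨!![3, 1; 3, 0], by decide⟩),
  (swap 0 3 * swap 1 2, ⟨!![3, 2; 0, 3], by decide⟩)]

def a4ToSL : A₄ →* SL₂ℤ₄ where
  toFun a := (a4Table.lookup a.1).getD 1
  map_one' := by decide
  map_mul' := by decide

theorem a4ToSL_tauConj (k : C₄) (a : A₄) :
    a4ToSL (tauConj k a) = rotPow k * a4ToSL a * (rotPow k)⁻¹ := by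
  revert k a; decide

def semidirectToSL : A₄ ⋊[tauConj] C₄ →* SL₂ℤ₄ :=
  SemidirectProduct.lift a4ToSL rotPow fun k => MonoidHom.ext (a4ToSL_tauConj k)

set_option maxRecDepth 10000 in
theorem semidirectToSL_bijective : Function.Bijective semidirectToSL := by decide

noncomputable def slEquivSemidirect : SL₂ℤ₄ ≃* A₄ ⋊[tauConj] C₄ :=
  (MulEquiv.ofBijective _ semidirectToSL_bijective).symm

theorem orderOf_map_slEquivSemidirect_symm_inr :
    orderOf (Matrix.SpecialLinearGroup.map (ZMod.castHom (show (2 : ℕ) ∣ 4 by norm_num) (ZMod 2))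
      (slEquivSemidirect.symm (SemidirectProduct.inr (Multiplicative.ofAdd 1)))) = 2 := by
  have hrot : slEquivSemidirect.symm (SemidirectProduct.inr (Multiplicative.ofAdd 1)) = rot := by
    simp [slEquivSemidirect, semidirectToSL, rotPow]
  rw [hrot]
  exact orderOf_eq_prime (by decide) (by decide)

def semidirectToPerm : A₄ ⋊[tauConj] C₄ →* S₄ :=
  SemidirectProduct.lift (alternatingGroup (Fin 4)).subtype tauPow fun k => by
    ext a; simp [tauConj]

theorem sign_tau : Perm.sign tau = -1 := Perm.sign_swap (by decide)

theorem semidirectToPerm_surjective : Function.Surjective semidirectToPerm := by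
  intro p
  by_cases hp : Perm.sign p = 1
  · exact ⟨SemidirectProduct.inl ⟨p, hp⟩, by simp [semidirectToPerm]⟩
  · have hpτ : p * tau ∈ A₄ := by
      rw [Perm.mem_alternatingGroup, map_mul, sign_tau, Int.units_ne_iff_eq_neg.mp hp]
      rfl
    refine ⟨.inl ⟨p * tau, hpτ⟩ * .inr (.ofAdd 1), ?_⟩
    simp [semidirectToPerm, tauPow, mul_assoc, tau]

theorem sign_semidirectToPerm_of_mul_self_eq_one {x : A₄ ⋊[tauConj] C₄} (hx : x * x = 1) :
    Perm.sign (semidirectToPerm x) = 1 := by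
  have hk : x.right.toAdd + x.right.toAdd = 0 := congrArg (fun y => y.right.toAdd) hx
  have hsign : Perm.sign (semidirectToPerm x) = (-1) ^ x.right.toAdd.val := by
    simp [semidirectToPerm, SemidirectProduct.lift, tauPow, zmodPowHom_apply, sign_tau]
    exact x.left.2
  rw [hsign]
  generalize x.right.toAdd = k at hk
  revert k; decide

noncomputable def sl2ToPerm : SL₂ℤ₄ →* S₄ := semidirectToPerm.comp slEquivSemidirect.toMonoidHom

theorem sl2ToPerm_surjective : Function.Surjective sl2ToPerm :=
  semidirectToPerm_surjective.comp slEquivSemidirect.surjective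

theorem sign_sl2ToPerm_of_mul_self_eq_one {g : SL₂ℤ₄} (hg : g * g = 1) :
    Perm.sign (sl2ToPerm g) = 1 :=
  sign_semidirectToPerm_of_mul_self_eq_one (by rw [← map_mul, hg, map_one])

theorem card_sl2 : Nat.card SL₂ℤ₄ = 48 := by
  rw [Nat.card_congr slEquivSemidirect.toEquiv, Nat.card_eq_fintype_card]
  rfl

theorem card_ker_sl2ToPerm : Nat.card sl2ToPerm.ker = 2 := by
  have h := sl2ToPerm.ker.card_mul_index
  rw [Subgroup.index_ker, MonoidHom.range_eq_top.mpr sl2ToPerm_surjective, Subgroup.card_top,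
    card_sl2, Nat.card_perm, Nat.card_fin, show Nat.factorial 4 = 24 from rfl] at h
  omega

end SL2ZMod4

open SL2ZMod4 in
/-- `SL₂(ℤ/4ℤ)` is isomorphic to a semidirect product `A₄ ⋊ C₄`, where the generator of
`C₄` maps to an element of order 2 (a transposition) under the reduction
`SL₂(ℤ/4ℤ) → SL₂(ℤ/2ℤ) ≅ S₃`; in particular `SL₂(ℤ/4ℤ)` is a nonsplit central extension
of `S₄` by `C₂`. -/
theorem stmt14 :
    (∃ (φ : Multiplicative (ZMod 4) →* MulAut (alternatingGroup (Fin 4)))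
      (e : Matrix.SpecialLinearGroup (Fin 2) (ZMod 4) ≃*
        (alternatingGroup (Fin 4) ⋊[φ] Multiplicative (ZMod 4))),
      orderOf (Matrix.SpecialLinearGroup.map
          (ZMod.castHom (show (2 : ℕ) ∣ 4 by norm_num) (ZMod 2))
          (e.symm (SemidirectProduct.inr (Multiplicative.ofAdd (1 : ZMod 4))))) = 2) ∧
    ∃ (N : Subgroup (Matrix.SpecialLinearGroup (Fin 2) (ZMod 4))) (hN : N.Normal),
      N ≤ Subgroup.center (Matrix.SpecialLinearGroup (Fin 2) (ZMod 4)) ∧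
      Nonempty (N ≃* Multiplicative (ZMod 2)) ∧
      (letI := hN;
        Nonempty ((Matrix.SpecialLinearGroup (Fin 2) (ZMod 4) ⧸ N) ≃* Equiv.Perm (Fin 4)) ∧
        ¬ ∃ s : Equiv.Perm (Fin 4) →* Matrix.SpecialLinearGroup (Fin 2) (ZMod 4),
          Function.Bijective ((QuotientGroup.mk' N).comp s)) := by
  let ψ := QuotientGroup.quotientKerEquivOfSurjective _ sl2ToPerm_surjective
  refine ⟨⟨tauConj, slEquivSemidirect, orderOf_map_slEquivSemidirect_symm_inr⟩, sl2ToPerm.ker,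
    inferInstance, Subgroup.le_center_of_card_eq_two card_ker_sl2ToPerm,
    ⟨mulEquivOfPrimeCardEq card_ker_sl2ToPerm (by simp)⟩, ⟨ψ⟩, ?_⟩
  rintro ⟨s, hs⟩
  exact Perm.not_surjective_comp_of_sign_eq_one (ψ.toMonoidHom.comp (QuotientGroup.mk' _))
    (fun g hg => sign_sl2ToPerm_of_mul_self_eq_one hg) s (ψ.surjective.comp hs.2)
end

section
/- Let G be a group with a normal subgroup N ≅ C2 × C2 and G/N ≅ A4, such that the conjugation action of G on N induces a nontrivial homomorphism A4 → Aut(N) ≅ S3. Then preimages in G of the commuting involutions of A4 commute with each other, and G is isomorphic to either (C2 × C2) ⋊ A4 or (C4 × C4) ⋊ C3. -/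
/-!
Conjugation gives a homomorphism `A₄ → Aut N ≅ S₃`. The involutions of `A₄` are commutators and
die in `S₃`, so a nontrivial action makes the 3-cycles act as 3-cycles on the three involutions
of `N`: the preimage `C` of the Klein four-subgroup `V ≤ A₄` is the centralizer of `N`, and lifts
of 3-cycles fix no nontrivial element of `N`. For `a, b ∈ C` the commutator `⁅a, b⁆ ∈ N` only
depends on the images in `V`, and a lift `t` of a 3-cycle with `(π a, π b) ↦ (π b, π a * π b)`
sends it to `⁅b, a * b⁆ = ⁅a, b⁆⁻¹ = ⁅a, b⁆`, whence `⁅a, b⁆ = 1`. So `C` is abelian of order 16,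
an element `c` of order 3 acts on it without fixed points, and `G = C ⋊ ⟨c⟩`. If `C` has
exponent 2, a lift `h` of an involution and its conjugate `c h c⁻¹` generate a `c`-stable
complement of `N` in `C` (as `h · c(h) · c²(h)` is `c`-fixed, hence trivial), which together
with `c` is a complement `≅ A₄` of `N`. Otherwise some `h ∈ C` has order 4, and
`C = ⟨h⟩ × ⟨c h c⁻¹⟩ ≅ C₄ × C₄`.
-/

open Subgroup
open scoped commutatorElement Pointwise

local notation "A₄" => alternatingGroup (Fin 4)
local notation "V₄" => Multiplicative (ZMod 2 × ZMod 2)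
local notation "S₃" => Equiv.Perm {m : V₄ // m ≠ 1}

namespace MulAut

variable (M : Type*) [Group M]

def toPermNeOne : MulAut M →* Equiv.Perm {m : M // m ≠ 1} where
  toFun u := (toPerm M u).subtypePerm fun _ => (map_eq_one_iff u u.injective).not
  map_one' := rfl
  map_mul' _ _ := (Equiv.Perm.subtypePerm_mul _ _ _ _).symm

variable {M}

theorem toPermNeOne_apply (u : MulAut M) (m : {m : M // m ≠ 1}) :
    (toPermNeOne M u m : M) = u m :=
  rfl

theorem toPermNeOne_injective : Function.Injective (toPermNeOne M) := by
  intro u v huv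
  ext m
  by_cases hm : m = 1
  · simp [hm]
  · simpa [toPermNeOne_apply] using congrArg Subtype.val (Equiv.ext_iff.1 huv ⟨m, hm⟩)

end MulAut

section GroupTheory

variable {G : Type*} [Group G]

theorem Subgroup.IsComplement'.exists_mulEquiv_semidirectProduct {N K : Type*} [Group N]
    [Group K] {H L : Subgroup G} [H.Normal] (h : H.IsComplement' L) (eH : H ≃* N)
    (eL : L ≃* K) : ∃ φ : K →* MulAut N, Nonempty (G ≃* N ⋊[φ] K) :=
  ⟨_, ⟨(SemidirectProduct.mulEquivSubgroup h).symm.trans (SemidirectProduct.congr' eH eL)⟩⟩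

theorem Subgroup.card_sup_le_of_le_normalizer {H K : Subgroup G} (hK : K ≤ normalizer (H : Set G)) :
    Nat.card ↥(H ⊔ K) ≤ Nat.card H * Nat.card K := by
  have hHK : ((H ⊔ K : Subgroup G) : Set G) = (H : Set G) * (K : Set G) :=
    coe_mul_of_right_le_normalizer_left H K hK
  calc Nat.card ↥(H ⊔ K) = Nat.card ↥((H : Set G) * (K : Set G)) := by rw [← hHK]; rfl
    _ ≤ Nat.card H * Nat.card K := Set.natCard_mul_le

theorem Subgroup.nonempty_mulEquiv_zmod_prod {H : Subgroup G} [Finite H] {x y : G} {m n : ℕ}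
    (hx : x ∈ H) (hy : y ∈ H) (hxy : Commute x y) (hdisj : Disjoint (zpowers x) (zpowers y))
    (hxm : orderOf x = m) (hyn : orderOf y = n) (hcard : Nat.card H = m * n) :
    Nonempty (H ≃* Multiplicative (ZMod m × ZMod n)) := by
  let ex : Multiplicative (ZMod m) ≃* zpowers x :=
    mulEquivOfCyclicCardEq (by rw [Nat.card_zpowers, hxm]; exact Nat.card_zmod m)
  let ey : Multiplicative (ZMod n) ≃* zpowers y :=
    mulEquivOfCyclicCardEq (by rw [Nat.card_zpowers, hyn]; exact Nat.card_zmod n)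
  let f := (zpowers x).subtype.comp ex.toMonoidHom
  let g := (zpowers y).subtype.comp ey.toMonoidHom
  have hf : f.range = zpowers x := by
    rw [MonoidHom.range_comp, MonoidHom.range_eq_top.2 ex.surjective, ← MonoidHom.range_eq_map,
      range_subtype]
  have hg : g.range = zpowers y := by
    rw [MonoidHom.range_comp, MonoidHom.range_eq_top.2 ey.surjective, ← MonoidHom.range_eq_map,
      range_subtype]
  have hcomm : ∀ a b, Commute (f a) (g b) := by
    intro a b
    obtain ⟨i, hi⟩ := mem_zpowers_iff.1 (ex a).2
    obtain ⟨j, hj⟩ := mem_zpowers_iff.1 (ey b).2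
    simpa [f, g, ← hi, ← hj] using hxy.zpow_zpow i j
  let e := MulEquiv.prodMultiplicative (G := ZMod m) (H := ZMod n)
  let F := (f.noncommCoprod g hcomm).comp e.toMonoidHom
  have hF : Function.Injective F := by
    refine ((MonoidHom.noncommCoprod_injective f g hcomm).2 ⟨?_, ?_, ?_⟩).comp
      e.injective
    · exact Subtype.val_injective.comp ex.injective
    · exact Subtype.val_injective.comp ey.injective
    · rwa [hf, hg]
  have hrange : F.range = H := by
    apply Subgroup.eq_of_le_of_card_ge
    · rw [MonoidHom.range_comp, MonoidHom.range_eq_top.2 e.surjective, ← MonoidHom.range_eq_map,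
        MonoidHom.noncommCoprod_range, hf, hg]
      exact sup_le (zpowers_le.2 hx) (zpowers_le.2 hy)
    · rw [hcard, ← Nat.card_congr (MonoidHom.ofInjective hF).toEquiv, Nat.card_congr e.toEquiv,
        Nat.card_prod]
      exact (congrArg₂ (· * ·) (Nat.card_zmod m) (Nat.card_zmod n)).ge
  exact ⟨((MonoidHom.ofInjective hF).trans (MulEquiv.subgroupCongr hrange)).symm⟩

theorem even_and_even_of_zpow_eq_zpow {x y : G} (hx : x ^ 2 = 1) (hy : y ^ 2 = 1) (hx1 : x ≠ 1)
    (hy1 : y ≠ 1) (hxy : x ≠ y) {i j : ℤ} (h : x ^ i = y ^ j) : Even i ∧ Even j := by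
  rw [← zpow_mod_orderOf, orderOf_eq_prime hx hx1] at h
  rw [← zpow_mod_orderOf y, orderOf_eq_prime hy hy1] at h
  rcases Int.emod_two_eq_zero_or_one i with hi | hi <;>
    rcases Int.emod_two_eq_zero_or_one j with hj | hj <;>
    simp_all [Int.even_iff, eq_comm]

theorem mul_conj_mul_conj_sq_eq_one {H : Subgroup G} {c : G}
    (hcomm : ∀ a ∈ H, ∀ b ∈ H, Commute a b) (hc : c ^ 3 = 1)
    (hH : ∀ h ∈ H, c * h * c⁻¹ ∈ H) (hfix : ∀ h ∈ H, c * h * c⁻¹ = h → h = 1)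
    {h : G} (hh : h ∈ H) : h * (c * h * c⁻¹) * (c ^ 2 * h * (c ^ 2)⁻¹) = 1 := by
  have h₁ := hH h hh
  have h₂ : c ^ 2 * h * (c ^ 2)⁻¹ ∈ H := by simpa [pow_two, mul_assoc] using hH _ h₁
  apply hfix _ (mul_mem (mul_mem hh h₁) h₂)
  have hc' : c * (c ^ 2 * h * (c ^ 2)⁻¹) * c⁻¹ = h := by
    calc c * (c ^ 2 * h * (c ^ 2)⁻¹) * c⁻¹ = c ^ 3 * h * (c ^ 3)⁻¹ := by group
      _ = h := by rw [hc]; group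
  calc c * (h * (c * h * c⁻¹) * (c ^ 2 * h * (c ^ 2)⁻¹)) * c⁻¹
      = (c * h * c⁻¹) * (c ^ 2 * h * (c ^ 2)⁻¹) * (c * (c ^ 2 * h * (c ^ 2)⁻¹) * c⁻¹) := by
        group
    _ = (c * h * c⁻¹) * (c ^ 2 * h * (c ^ 2)⁻¹) * h := by rw [hc']
    _ = h * (c * h * c⁻¹) * (c ^ 2 * h * (c ^ 2)⁻¹) := by
        simpa only [mul_assoc] using ((hcomm _ hh _ h₁).mul_right (hcomm _ hh _ h₂)).eq.symm

theorem commutatorElement_mul_left_of_commute {m x y : G} (hx : Commute m x) (hy : Commute m y) :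
    ⁅m * x, y⁆ = ⁅x, y⁆ := by
  have hm : Commute m ⁅x, y⁆ := by
    rw [commutatorElement_def]
    exact ((hx.mul_right hy).mul_right hx.inv_right).mul_right hy.inv_right
  calc ⁅m * x, y⁆ = m * ⁅x, y⁆ * m⁻¹ * ⁅m, y⁆ := by simp only [commutatorElement_def]; group
    _ = ⁅x, y⁆ := by
      rw [commutatorElement_eq_one_iff_commute.2 hy, mul_one, hm.eq, mul_inv_cancel_right]

theorem commutatorElement_mul_right_of_commute {m x y : G} (hx : Commute m x) (hy : Commute m y) :
    ⁅x, m * y⁆ = ⁅x, y⁆ := by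
  rw [← commutatorElement_inv, commutatorElement_mul_left_of_commute hy hx, commutatorElement_inv]

theorem Subgroup.isComplement'_of_bijective {Q : Type*} [Group Q] {N K : Subgroup G} {π : G →* Q}
    (hker : π.ker = N) (h : Function.Bijective (π.comp K.subtype)) : N.IsComplement' K := by
  refine isComplement'_of_disjoint_and_mul_eq_univ (disjoint_def.2 fun {x} hxN hxK => ?_)
    (Set.eq_univ_of_forall fun g => ?_)
  · rw [← hker, MonoidHom.mem_ker] at hxN
    simpa using h.1 (a₁ := ⟨x, hxK⟩) (a₂ := 1) (by simpa using hxN)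
  · obtain ⟨k, hk⟩ := h.2 (π g)
    rw [MonoidHom.comp_apply, coe_subtype] at hk
    refine ⟨g * (k : G)⁻¹, ?_, k, k.2, inv_mul_cancel_right g k⟩
    rw [← hker, SetLike.mem_coe, MonoidHom.mem_ker, map_mul, map_inv, hk, mul_inv_cancel]

end GroupTheory

namespace AlternatingGroupFinFour

set_option maxRecDepth 40000
set_option synthInstance.maxSize 512

theorem card_eq : Nat.card A₄ = 12 := by
  rw [nat_card_alternatingGroup, Nat.card_eq_fintype_card, Fintype.card_fin]; rfl

theorem exists_sq_eq_one_ne_one : ∃ x : A₄, x ^ 2 = 1 ∧ x ≠ 1 := by decide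

theorem mul_comm_of_sq_eq_one : ∀ x y : A₄, x ^ 2 = 1 → y ^ 2 = 1 → x * y = y * x := by decide

theorem pow_three_eq_one_of_sq_ne_one : ∀ x : A₄, x ^ 2 ≠ 1 → x ^ 3 = 1 := by decide

theorem exists_commutatorElement_eq_of_sq_eq_one :
    ∀ x : A₄, x ^ 2 = 1 → ∃ y z : A₄, ⁅y, z⁆ = x := by decide

theorem exists_conj_eq_or_conj_eq_inv : ∀ x y : A₄, x ^ 2 ≠ 1 → y ^ 2 ≠ 1 →
    ∃ g : A₄, g * x * g⁻¹ = y ∨ g * x * g⁻¹ = y⁻¹ := by decide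

theorem mul_ne_mul_of_sq_ne_one : ∀ σ x : A₄, σ ^ 2 ≠ 1 → x ^ 2 = 1 → x ≠ 1 → σ * x ≠ x * σ := by
  decide

theorem exists_conj_eq_and_conj_eq_mul : ∀ x y : A₄, x ^ 2 = 1 → y ^ 2 = 1 → x ≠ 1 → y ≠ 1 →
    x ≠ y → ∃ σ : A₄, σ ^ 2 ≠ 1 ∧ σ * x * σ⁻¹ = y ∧ σ * y * σ⁻¹ = x * y := by decide

theorem exists_sq_mul_pow_eq_one : ∀ σ z : A₄, σ ^ 2 ≠ 1 → ∃ i < 3, (z * σ ^ i) ^ 2 = 1 := by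
  decide

theorem exists_mul_pow_mem : ∀ x σ z : A₄, x ^ 2 = 1 → x ≠ 1 → σ ^ 2 ≠ 1 →
    ∃ i < 3, z * σ ^ i ∈ ({1, x, σ * x * σ⁻¹, x * (σ * x * σ⁻¹)} : Finset A₄) := by decide

theorem eq_top_of_mem {K : Subgroup A₄} {x σ : A₄} (hx : x ^ 2 = 1) (hx1 : x ≠ 1)
    (hσ : σ ^ 2 ≠ 1) (hxK : x ∈ K) (hσK : σ ∈ K) : K = ⊤ := by
  refine eq_top_iff.2 fun z _ => ?_
  obtain ⟨i, -, hi⟩ := exists_mul_pow_mem x σ z hx hx1 hσ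
  have hσxK : σ * x * σ⁻¹ ∈ K := mul_mem (mul_mem hσK hxK) (inv_mem hσK)
  have hmem : z * σ ^ i ∈ K := by
    simp only [Finset.mem_insert, Finset.mem_singleton] at hi
    rcases hi with hi | hi | hi | hi <;> rw [hi]
    exacts [one_mem K, hxK, hσxK, mul_mem hxK hσxK]
  simpa using mul_mem hmem (inv_mem (pow_mem hσK i))

theorem commutatorElement_eq_one_of_sq_eq_one :
    ∀ p q : S₃, ⁅p, q⁆ ^ 2 = 1 → ⁅p, q⁆ = 1 := by decide

theorem apply_ne_of_pow_three_eq_one : ∀ p : S₃, p ^ 3 = 1 → p ≠ 1 → ∀ t, p t ≠ t := by decide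

theorem map_eq_one_iff_sq_eq_one (f : A₄ →* S₃) (hf : f ≠ 1) {x : A₄} : f x = 1 ↔ x ^ 2 = 1 := by
  have hV : ∀ y : A₄, y ^ 2 = 1 → f y = 1 := by
    intro y hy
    obtain ⟨a, b, rfl⟩ := exists_commutatorElement_eq_of_sq_eq_one y hy
    rw [map_commutatorElement]
    apply commutatorElement_eq_one_of_sq_eq_one
    rw [← map_commutatorElement, ← map_pow, hy, map_one]
  refine ⟨fun hfx => by_contra fun hx => hf (MonoidHom.ext fun y => ?_), hV x⟩
  by_cases hy : y ^ 2 = 1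
  · exact hV y hy
  obtain ⟨g, h | h⟩ := exists_conj_eq_or_conj_eq_inv x y hx hy
  · simp [← h, hfx]
  · rw [← inv_inv y, ← h]
    simp [hfx]

theorem map_apply_ne (f : A₄ →* S₃) (hf : f ≠ 1) {x : A₄} (hx : x ^ 2 ≠ 1)
    (t : {m : V₄ // m ≠ 1}) : f x t ≠ t :=
  apply_ne_of_pow_three_eq_one _ (by rw [← map_pow, pow_three_eq_one_of_sq_ne_one x hx, map_one])
    ((map_eq_one_iff_sq_eq_one f hf).not.2 hx) t

end AlternatingGroupFinFour

/-- In `A₄` the solutions of `x ^ 2 = 1` form the Klein four-subgroup; the other elements are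
the 3-cycles. -/
structure IsKleinExtensionWithC₃Action {G : Type*} [Group G] (N : Subgroup G) (π : G →* A₄) :
    Prop where
  ker_eq : π.ker = N
  surjective : Function.Surjective π
  card_eq : Nat.card N = 4
  sq_eq_one : ∀ n ∈ N, n ^ 2 = 1
  mem_centralizer_iff : ∀ g, g ∈ centralizer (N : Set G) ↔ π g ^ 2 = 1
  eq_one_of_conj_eq_self : ∀ g, π g ^ 2 ≠ 1 → ∀ n ∈ N, g * n * g⁻¹ = n → n = 1

namespace IsKleinExtensionWithC₃Action

open AlternatingGroupFinFour

variable {G : Type*} [Group G] {N : Subgroup G} {π : G →* A₄}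

theorem mem_iff (hE : IsKleinExtensionWithC₃Action N π) {g : G} : g ∈ N ↔ π g = 1 := by
  rw [← hE.ker_eq, MonoidHom.mem_ker]

theorem natCard_eq (hE : IsKleinExtensionWithC₃Action N π) : Nat.card G = 48 := by
  rw [card_eq_card_quotient_mul_card_subgroup π.ker,
    Nat.card_congr (QuotientGroup.quotientKerEquivOfSurjective π hE.surjective).toEquiv,
    AlternatingGroupFinFour.card_eq,
    hE.ker_eq, hE.card_eq]

theorem finite (hE : IsKleinExtensionWithC₃Action N π) : Finite G :=
  Nat.finite_of_card_ne_zero (by rw [hE.natCard_eq]; norm_num)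

theorem conj_mem_centralizer (hE : IsKleinExtensionWithC₃Action N π) (g : G) {h : G}
    (hh : h ∈ centralizer (N : Set G)) : g * h * g⁻¹ ∈ centralizer (N : Set G) := by
  rw [hE.mem_centralizer_iff] at hh ⊢
  rw [map_mul, map_mul, map_inv, conj_pow, hh, mul_one, mul_inv_cancel]

theorem commute_of_mem (hE : IsKleinExtensionWithC₃Action N π) {n h : G} (hn : n ∈ N)
    (hh : π h ^ 2 = 1) : Commute n h :=
  (hE.mem_centralizer_iff h).2 hh n hn

theorem commutatorElement_eq_of_map_eq (hE : IsKleinExtensionWithC₃Action N π) {a b a' b' : G}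
    (ha : π a ^ 2 = 1) (hb : π b ^ 2 = 1) (haa : π a' = π a) (hbb : π b' = π b) :
    ⁅a', b'⁆ = ⁅a, b⁆ := by
  have hm : a' * a⁻¹ ∈ N := hE.mem_iff.2 (by simp [haa])
  have hm' : b' * b⁻¹ ∈ N := hE.mem_iff.2 (by simp [hbb])
  have hm'2 : π (b' * b⁻¹) ^ 2 = 1 := by rw [hE.mem_iff.1 hm', one_pow]
  calc ⁅a', b'⁆ = ⁅a' * a⁻¹ * a, b' * b⁻¹ * b⁆ := by simp
    _ = ⁅a, b⁆ := by
      rw [commutatorElement_mul_left_of_commute (hE.commute_of_mem hm ha)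
          ((hE.commute_of_mem hm hm'2).mul_right (hE.commute_of_mem hm hb)),
        commutatorElement_mul_right_of_commute (hE.commute_of_mem hm' ha)
          (hE.commute_of_mem hm' hb)]

theorem commute_of_sq_eq_one (hE : IsKleinExtensionWithC₃Action N π) {a b : G}
    (ha : π a ^ 2 = 1) (hb : π b ^ 2 = 1) : Commute a b := by
  by_cases ha1 : π a = 1
  · exact hE.commute_of_mem (hE.mem_iff.2 ha1) hb
  by_cases hb1 : π b = 1
  · exact (hE.commute_of_mem (hE.mem_iff.2 hb1) ha).symm
  rw [← commutatorElement_eq_one_iff_commute]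
  by_cases hab : π a = π b
  · rw [hE.commutatorElement_eq_of_map_eq ha ha rfl hab.symm, commutatorElement_self]
  obtain ⟨σ, hσ, hσa, hσb⟩ := exists_conj_eq_and_conj_eq_mul _ _ ha hb ha1 hb1 hab
  obtain ⟨t, rfl⟩ := hE.surjective σ
  have hcomm : Commute (π a) (π b) := mul_comm_of_sq_eq_one _ _ ha hb
  have hN : ⁅a, b⁆ ∈ N := hE.mem_iff.2 (by
    rw [map_commutatorElement, commutatorElement_eq_one_iff_commute]; exact hcomm)
  refine hE.eq_one_of_conj_eq_self t hσ _ hN ?_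
  calc t * ⁅a, b⁆ * t⁻¹ = ⁅t * a * t⁻¹, t * b * t⁻¹⁆ := by simp only [commutatorElement_def]; group
    _ = ⁅b, a * b⁆ := hE.commutatorElement_eq_of_map_eq hb
        (by rw [map_mul, hcomm.mul_pow, ha, hb, one_mul]) (by simpa using hσa) (by simpa using hσb)
    _ = ⁅a, b⁆⁻¹ := by simp only [commutatorElement_def]; group
    _ = ⁅a, b⁆ := inv_eq_of_mul_eq_one_right (by rw [← pow_two]; exact hE.sq_eq_one _ hN)

theorem commute_of_mem_centralizer (hE : IsKleinExtensionWithC₃Action N π) {a b : G}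
    (ha : a ∈ centralizer (N : Set G)) (hb : b ∈ centralizer (N : Set G)) : Commute a b :=
  hE.commute_of_sq_eq_one ((hE.mem_centralizer_iff a).1 ha) ((hE.mem_centralizer_iff b).1 hb)

theorem sq_ne_one_of_orderOf_eq_three (hE : IsKleinExtensionWithC₃Action N π) {c : G}
    (hc : orderOf c = 3) : π c ^ 2 ≠ 1 := by
  intro h2
  have h3 : π c ^ 3 = 1 := by rw [← map_pow, ← hc, pow_orderOf_eq_one, map_one]
  have h1 : π c = 1 := by rwa [pow_succ, h2, one_mul] at h3
  have := orderOf_dvd_of_pow_eq_one (hE.sq_eq_one c (hE.mem_iff.2 h1))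
  rw [hc] at this
  norm_num at this

theorem eq_one_of_mem_centralizer_of_conj_eq_self (hE : IsKleinExtensionWithC₃Action N π)
    {c h : G} (hc : π c ^ 2 ≠ 1) (hh : h ∈ centralizer (N : Set G)) (hch : c * h * c⁻¹ = h) :
    h = 1 := by
  rw [hE.mem_centralizer_iff] at hh
  have hπh : π h = 1 := by
    by_contra hπh
    apply mul_ne_mul_of_sq_ne_one _ _ hc hh hπh
    simpa using congrArg π (mul_inv_eq_iff_eq_mul.1 hch)
  exact hE.eq_one_of_conj_eq_self c hc h (hE.mem_iff.2 hπh) hch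

theorem isComplement'_centralizer_zpowers (hE : IsKleinExtensionWithC₃Action N π) {c : G}
    (hc : orderOf c = 3) : (centralizer (N : Set G)).IsComplement' (zpowers c) := by
  refine isComplement'_of_disjoint_and_mul_eq_univ (disjoint_def.2 fun {x} hxC hxc => ?_)
    (Set.eq_univ_of_forall fun g => ?_)
  · have h3 : x ^ 3 = 1 := orderOf_dvd_iff_pow_eq_one.1 (hc ▸ orderOf_dvd_of_mem_zpowers hxc)
    have hπ3 : π x ^ 3 = 1 := by rw [← map_pow, h3, map_one]
    rw [hE.mem_centralizer_iff] at hxC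
    have hπ : π x = 1 := by rwa [pow_succ, hxC, one_mul] at hπ3
    rwa [pow_succ, hE.sq_eq_one x (hE.mem_iff.2 hπ), one_mul] at h3
  · obtain ⟨i, -, hi⟩ := exists_sq_mul_pow_eq_one (π c) (π g) (hE.sq_ne_one_of_orderOf_eq_three hc)
    exact ⟨g * c ^ i, (hE.mem_centralizer_iff _).2 (by simpa using hi), (c ^ i)⁻¹,
      inv_mem (npow_mem_zpowers c i), mul_inv_cancel_right g _⟩

theorem exists_lift_kleinFour_mem_normalizer (hE : IsKleinExtensionWithC₃Action N π)
    (hA : ∀ h ∈ centralizer (N : Set G), h ^ 2 = 1) {c : G} (hc : orderOf c = 3) :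
    ∃ S : Subgroup G, Nat.card S ≤ 4 ∧ c ∈ normalizer (S : Set G) ∧
      ∃ h ∈ S, π h ^ 2 = 1 ∧ π h ≠ 1 := by
  have := hE.finite
  have hσ := hE.sq_ne_one_of_orderOf_eq_three hc
  obtain ⟨x, hx2, hx1⟩ := exists_sq_eq_one_ne_one
  obtain ⟨h, rfl⟩ := hE.surjective x
  have hh : h ∈ centralizer (N : Set G) := (hE.mem_centralizer_iff h).2 hx2
  set k := c * h * c⁻¹ with hk_def
  have hk := hE.conj_mem_centralizer c hh
  have hck : c * k * c⁻¹ = (h * k)⁻¹ := by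
    have hnorm := mul_conj_mul_conj_sq_eq_one (fun a ha b hb => hE.commute_of_mem_centralizer ha hb)
      (hc ▸ pow_orderOf_eq_one c) (fun a ha => hE.conj_mem_centralizer c ha)
      (fun a ha => hE.eq_one_of_mem_centralizer_of_conj_eq_self hσ ha) hh
    calc c * k * c⁻¹ = c ^ 2 * h * (c ^ 2)⁻¹ := by rw [hk_def, pow_two]; group
      _ = (h * k)⁻¹ := eq_inv_of_mul_eq_one_right hnorm
  refine ⟨zpowers h ⊔ zpowers k, ?_, mem_normalizer_fintype fun n hn => ?_,
    h, mem_sup_left (mem_zpowers h), hx2, hx1⟩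
  · have hkh : zpowers k ≤ normalizer (zpowers h : Set G) := by
      refine (zpowers_le.2 (Subgroup.mem_centralizer_iff.2 fun n hn => ?_)).trans
        (centralizer_le_normalizer _)
      obtain ⟨i, rfl⟩ := mem_zpowers_iff.1 hn
      exact ((hE.commute_of_mem_centralizer hh hk).zpow_left i).eq
    calc Nat.card ↥(zpowers h ⊔ zpowers k) ≤ Nat.card (zpowers h) * Nat.card (zpowers k) :=
          card_sup_le_of_le_normalizer hkh
      _ ≤ 2 * 2 := by
        rw [Nat.card_zpowers, Nat.card_zpowers]
        exact Nat.mul_le_mul (orderOf_le_of_pow_eq_one two_pos (hA h hh))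
          (orderOf_le_of_pow_eq_one two_pos (hA k hk))
  · have hmap :
        (zpowers h ⊔ zpowers k).map (MulAut.conj c).toMonoidHom ≤ zpowers h ⊔ zpowers k := by
      rw [Subgroup.map_sup, MonoidHom.map_zpowers, MonoidHom.map_zpowers]
      refine sup_le (zpowers_le.2 (mem_sup_right (mem_zpowers _))) (zpowers_le.2 ?_)
      simp only [MulEquiv.coe_toMonoidHom, MulAut.conj_apply]
      rw [hck]
      exact inv_mem (mul_mem (mem_sup_left (mem_zpowers h)) (mem_sup_right (mem_zpowers k)))
    exact hmap (mem_map_of_mem _ hn)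

theorem exists_isComplement'_mulEquiv_alternatingGroup (hE : IsKleinExtensionWithC₃Action N π)
    (hA : ∀ h ∈ centralizer (N : Set G), h ^ 2 = 1) {c : G} (hc : orderOf c = 3) :
    ∃ K : Subgroup G, N.IsComplement' K ∧ Nonempty (K ≃* A₄) := by
  have := hE.finite
  obtain ⟨S, hS, hcS, h, hhS, hh2, hh1⟩ := hE.exists_lift_kleinFour_mem_normalizer hA hc
  have hK : Nat.card ↥(S ⊔ zpowers c) ≤ Nat.card A₄ := by
    calc Nat.card ↥(S ⊔ zpowers c) ≤ Nat.card S * Nat.card (zpowers c) :=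
          card_sup_le_of_le_normalizer (zpowers_le.2 hcS)
      _ ≤ Nat.card A₄ := by rw [Nat.card_zpowers, hc, AlternatingGroupFinFour.card_eq]; omega
  have hsurj : Function.Surjective (π.comp (S ⊔ zpowers c).subtype) := by
    rw [← MonoidHom.range_eq_top, MonoidHom.range_comp, range_subtype]
    exact eq_top_of_mem hh2 hh1 (hE.sq_ne_one_of_orderOf_eq_three hc)
      (mem_map_of_mem π (mem_sup_left hhS)) (mem_map_of_mem π (mem_sup_right (mem_zpowers c)))
  have hbij := hsurj.bijective_of_nat_card_le hK
  exact ⟨_, isComplement'_of_bijective hE.ker_eq hbij, ⟨MulEquiv.ofBijective _ hbij⟩⟩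

theorem disjoint_zpowers_conj (hE : IsKleinExtensionWithC₃Action N π) {c h : G}
    (hc : π c ^ 2 ≠ 1) (hh : h ∈ centralizer (N : Set G)) (hh2 : h ^ 2 ≠ 1) :
    Disjoint (zpowers h) (zpowers (c * h * c⁻¹)) := by
  set k := c * h * c⁻¹
  have hk := hE.conj_mem_centralizer c hh
  rw [hE.mem_centralizer_iff] at hh hk
  have hπh : π h ≠ 1 := fun h1 => hh2 (hE.sq_eq_one h (hE.mem_iff.2 h1))
  have hπk : π k ≠ 1 := by simpa [k] using hπh
  have hπhk : π h ≠ π k := fun heq =>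
    mul_ne_mul_of_sq_ne_one _ _ hc hh hπh (mul_inv_eq_iff_eq_mul.1 (by simpa [k] using heq.symm))
  have hh4 : (h ^ 2) ^ 2 = 1 := hE.sq_eq_one _ (hE.mem_iff.2 (by rw [map_pow, hh]))
  have hk4 : (k ^ 2) ^ 2 = 1 := hE.sq_eq_one _ (hE.mem_iff.2 (by rw [map_pow, hk]))
  have hk2 : k ^ 2 ≠ 1 := by simpa [k, conj_pow] using hh2
  have hhk2 : h ^ 2 ≠ k ^ 2 := fun heq => hh2 (hE.eq_one_of_conj_eq_self c hc _
    (hE.mem_iff.2 (by rw [map_pow, hh])) (by rw [← conj_pow, heq]))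
  have hsq : ∀ (g : G) (r : ℤ), g ^ (r + r) = (g ^ 2) ^ r := fun g r => by
    rw [← two_mul, zpow_mul]; norm_cast
  -- `h ^ i = k ^ j` forces `i` and `j` to be even (look in `A₄`), and then `i / 2` to be even
  -- (look at the squares in `N`)
  rw [disjoint_def]
  intro z hzh hzk
  obtain ⟨i, rfl⟩ := mem_zpowers_iff.1 hzh
  obtain ⟨j, hj⟩ := mem_zpowers_iff.1 hzk
  obtain ⟨⟨i, rfl⟩, ⟨j, rfl⟩⟩ :=
    even_and_even_of_zpow_eq_zpow hh hk hπh hπk hπhk (by rw [← map_zpow, ← map_zpow, hj])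
  rw [hsq, hsq] at hj
  obtain ⟨⟨i, rfl⟩, -⟩ := even_and_even_of_zpow_eq_zpow hh4 hk4 hh2 hk2 hhk2 hj.symm
  rw [hsq, hsq, hh4, one_zpow]

theorem nonempty_centralizer_mulEquiv_zmod_four_prod (hE : IsKleinExtensionWithC₃Action N π)
    {c h : G} (hc : orderOf c = 3) (hh : h ∈ centralizer (N : Set G)) (hh2 : h ^ 2 ≠ 1) :
    Nonempty (centralizer (N : Set G) ≃* Multiplicative (ZMod 4 × ZMod 4)) := by
  have := hE.finite
  have hh4 : (h ^ 2) ^ 2 = 1 :=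
    hE.sq_eq_one _ (hE.mem_iff.2 (by rw [map_pow]; exact (hE.mem_centralizer_iff h).1 hh))
  have h4 : orderOf h = 4 := orderOf_eq_prime_pow (p := 2) (n := 1) (by simpa using hh2)
    (by rwa [pow_succ, pow_one, pow_mul])
  have hk4 : orderOf (c * h * c⁻¹) = 4 := by
    rw [← h4, ← MulAut.conj_apply, ← MulEquiv.coe_toMonoidHom]
    exact orderOf_injective _ (MulAut.conj c).injective h
  have hcard : Nat.card (centralizer (N : Set G)) = 4 * 4 := by
    have := (hE.isComplement'_centralizer_zpowers hc).card_mul_card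
    rw [Nat.card_zpowers, hc, hE.natCard_eq] at this
    omega
  have hk := hE.conj_mem_centralizer c hh
  exact nonempty_mulEquiv_zmod_prod hh hk (hE.commute_of_mem_centralizer hh hk)
    (hE.disjoint_zpowers_conj (hE.sq_ne_one_of_orderOf_eq_three hc) hh hh2) h4 hk4 hcard

end IsKleinExtensionWithC₃Action

open AlternatingGroupFinFour in
theorem isKleinExtensionWithC₃Action_of_mulEquiv {G : Type*} [Group G] {N : Subgroup G} [N.Normal]
    (e : N ≃* V₄) (eq : G ⧸ N ≃* A₄) (hnontriv : ∃ (g : G) (n : N), g * (n : G) * g⁻¹ ≠ n) :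
    IsKleinExtensionWithC₃Action N (eq.toMonoidHom.comp (QuotientGroup.mk' N)) := by
  set π := eq.toMonoidHom.comp (QuotientGroup.mk' N)
  let ρ : G →* S₃ :=
    (MulAut.toPermNeOne V₄).comp ((MulAut.congr e).toMonoidHom.comp MulAut.conjNormal)
  have hρ : ∀ g, ρ g = 1 ↔ g ∈ centralizer (N : Set G) := by
    intro g
    have hinj : Function.Injective ((MulAut.toPermNeOne V₄).comp (MulAut.congr e).toMonoidHom) :=
      MulAut.toPermNeOne_injective.comp (MulAut.congr e).injective
    calc ρ g = 1 ↔ MulAut.conjNormal g = 1 := (injective_iff_map_eq_one' _).1 hinj _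
      _ ↔ ∀ n ∈ N, n * g = g * n := by
        simp only [MulEquiv.ext_iff, Subtype.ext_iff, MulAut.conjNormal_apply, MulAut.one_apply,
          Subtype.forall]
        exact forall₂_congr fun n _ => mul_inv_eq_iff_eq_mul.trans eq_comm
      _ ↔ g ∈ centralizer (N : Set G) := Subgroup.mem_centralizer_iff.symm
  have hcomm : ∀ a b : N, a * b = b * a := fun a b =>
    e.injective (by rw [map_mul, map_mul, mul_comm])
  have hN : N ≤ ρ.ker := fun n hn => (hρ n).2 fun m hm =>
    congrArg Subtype.val (hcomm ⟨m, hm⟩ ⟨n, hn⟩)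
  let f : A₄ →* S₃ := (QuotientGroup.lift N ρ hN).comp eq.symm.toMonoidHom
  have hf : ∀ g, f (π g) = ρ g := fun g => by simp [f, π]
  have hf1 : f ≠ 1 := by
    obtain ⟨g, n, hgn⟩ := hnontriv
    intro h1
    have := (hρ g).1 (by rw [← hf, h1, MonoidHom.one_apply])
    exact hgn (mul_inv_eq_iff_eq_mul.2 (Subgroup.mem_centralizer_iff.1 this n n.2).symm)
  refine ⟨by ext g; simp [π], eq.surjective.comp (QuotientGroup.mk'_surjective N), ?_, ?_, ?_, ?_⟩
  · rw [Nat.card_congr e.toEquiv]; simp [Nat.card_eq_fintype_card]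
  · have hV : ∀ v : V₄, v ^ 2 = 1 := by decide
    exact fun n hn => congrArg Subtype.val (e.injective (by rw [map_pow, hV, map_one]) :
      (⟨n, hn⟩ : N) ^ 2 = 1)
  · intro g
    rw [← hρ, ← hf, map_eq_one_iff_sq_eq_one f hf1]
  · intro g hg n hn hgn
    by_contra hn1
    refine map_apply_ne f hf1 hg ⟨e ⟨n, hn⟩, by simpa using hn1⟩ ?_
    have hfix : MulAut.conjNormal g ⟨n, hn⟩ = ⟨n, hn⟩ := Subtype.ext hgn
    rw [hf]
    apply Subtype.ext
    simp [ρ, MulAut.toPermNeOne_apply, hfix]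

/-- Let `G` have a normal subgroup `N ≅ C₂ × C₂` with `G/N ≅ A₄` such that the conjugation
action of `G` on `N` is nontrivial (inducing a nontrivial `A₄ → Aut(N)`). Then preimages in
`G` of the (commuting) involutions of `A₄` commute with each other, and `G` is isomorphic to
`(C₂ × C₂) ⋊ A₄` or `(C₄ × C₄) ⋊ C₃`. -/
theorem stmt15 (G : Type) [Group G] (N : Subgroup G) [N.Normal]
    (e2 : N ≃* Multiplicative (ZMod 2 × ZMod 2))
    (eq : (G ⧸ N) ≃* alternatingGroup (Fin 4))
    (hnontriv : ∃ (g : G) (x : N), g * (x : G) * g⁻¹ ≠ (x : G)) :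
    (∀ w w' : G,
      (QuotientGroup.mk' N w) ^ 2 = 1 → QuotientGroup.mk' N w ≠ 1 →
      (QuotientGroup.mk' N w') ^ 2 = 1 → QuotientGroup.mk' N w' ≠ 1 →
      Commute w w') ∧
    ((∃ φ : alternatingGroup (Fin 4) →* MulAut (Multiplicative (ZMod 2 × ZMod 2)),
        Nonempty (G ≃*
          (Multiplicative (ZMod 2 × ZMod 2) ⋊[φ] alternatingGroup (Fin 4)))) ∨
     (∃ φ : Multiplicative (ZMod 3) →* MulAut (Multiplicative (ZMod 4 × ZMod 4)),
        Nonempty (G ≃*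
          (Multiplicative (ZMod 4 × ZMod 4) ⋊[φ] Multiplicative (ZMod 3))))) := by
  have hE := isKleinExtensionWithC₃Action_of_mulEquiv e2 eq hnontriv
  have hsq : ∀ w : G, QuotientGroup.mk' N w ^ 2 = 1 → eq (QuotientGroup.mk' N w) ^ 2 = 1 :=
    fun w hw => by rw [← map_pow, hw, map_one]
  refine ⟨fun w w' hw _ hw' _ => hE.commute_of_sq_eq_one (hsq w hw) (hsq w' hw'), ?_⟩
  have := hE.finite
  have : Fact (Nat.Prime 3) := ⟨Nat.prime_three⟩
  obtain ⟨c, hc⟩ := exists_prime_orderOf_dvd_card' 3 (by rw [hE.natCard_eq]; norm_num)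
  by_cases hA : ∀ h ∈ centralizer (N : Set G), h ^ 2 = 1
  · obtain ⟨K, hK, ⟨eK⟩⟩ := hE.exists_isComplement'_mulEquiv_alternatingGroup hA hc
    exact Or.inl (hK.exists_mulEquiv_semidirectProduct e2 eK)
  · obtain ⟨h, hh, hh2⟩ : ∃ h ∈ centralizer (N : Set G), h ^ 2 ≠ 1 := by simpa using hA
    obtain ⟨eC⟩ := hE.nonempty_centralizer_mulEquiv_zmod_four_prod hc hh hh2
    have hcard : Nat.card (zpowers c) = 3 := by rw [Nat.card_zpowers, hc]
    exact Or.inr ((hE.isComplement'_centralizer_zpowers hc).exists_mulEquiv_semidirectProduct eC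
      (mulEquivOfPrimeCardEq hcard (Nat.card_zmod 3)))
end

section
/- Let L ⊂ Q^n be the lattice generated by the standard lattice Z^n together with all vectors (a_1/2, ..., a_n/2) with all a_i odd integers, and let W = (Z/2Z)^n ⋊ S_n act on L by signed permutations of coordinates. Then every W-stable generating set of L/4L has size at least 2^n, and the W-orbit of (1/2,...,±1/2)-vectors is a W-stable generating set of L/4L of size exactly 2^n. -/
/-- The vectors in `ℚⁿ` with all coordinates integers. -/
def intVecs (n : ℕ) : Set (Fin n → ℚ) := {v | ∀ i, ∃ m : ℤ, v i = m}

/-- The vectors in `ℚⁿ` with all coordinates halves of odd integers. -/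
def halfOddVecs (n : ℕ) : Set (Fin n → ℚ) := {v | ∀ i, ∃ m : ℤ, Odd m ∧ v i = m / 2}

/-- The lattice `L ⊂ ℚⁿ` generated by `ℤⁿ` and all vectors `(a₁/2, …, aₙ/2)` with all
`aᵢ` odd (the `Bₙ` weight lattice). -/
def weightLattice (n : ℕ) : AddSubgroup (Fin n → ℚ) :=
  AddSubgroup.closure (intVecs n ∪ halfOddVecs n)

/-- The sublattice `4L` of `L`. -/
def fourL (n : ℕ) : AddSubgroup (Fin n → ℚ) :=
  AddSubgroup.closure ((fun v => (4 : ℚ) • v) '' (weightLattice n : Set (Fin n → ℚ)))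

def Lsub (n : ℕ) : AddSubgroup (Fin n → ℚ) where
  carrier := intVecs n ∪ halfOddVecs n
  zero_mem' := Or.inl fun i => ⟨0, by simp⟩
  add_mem' := by
    rintro a b (ha | ha) (hb | hb)
    · left; intro i
      obtain ⟨m, hm⟩ := ha i; obtain ⟨k, hk⟩ := hb i
      exact ⟨m + k, by simp [Pi.add_apply, hm, hk]⟩
    · right; intro i
      obtain ⟨m, hm⟩ := ha i; obtain ⟨k, hko, hk⟩ := hb i
      refine ⟨2 * m + k, ?_, ?_⟩
      · obtain ⟨t, ht⟩ := hko; exact ⟨m + t, by omega⟩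
      · simp only [Pi.add_apply, hm, hk]; push_cast; ring
    · right; intro i
      obtain ⟨m, hmo, hm⟩ := ha i; obtain ⟨k, hk⟩ := hb i
      refine ⟨m + 2 * k, ?_, ?_⟩
      · obtain ⟨t, ht⟩ := hmo; exact ⟨t + k, by omega⟩
      · simp only [Pi.add_apply, hm, hk]; push_cast; ring
    · left; intro i
      obtain ⟨m, hmo, hm⟩ := ha i; obtain ⟨k, hko, hk⟩ := hb i
      obtain ⟨t, ht⟩ : Even (m + k) := hmo.add_odd hko
      refine ⟨t, ?_⟩
      simp only [Pi.add_apply, hm, hk]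
      have : ((m : ℚ) + k) = ((t : ℚ) + t) := by exact_mod_cast congrArg (Int.cast : ℤ → ℚ) ht
      linarith
  neg_mem' := by
    rintro a (ha | ha)
    · left; intro i; obtain ⟨m, hm⟩ := ha i
      exact ⟨-m, by simp [Pi.neg_apply, hm]⟩
    · right; intro i; obtain ⟨m, hmo, hm⟩ := ha i
      refine ⟨-m, hmo.neg, ?_⟩
      simp only [Pi.neg_apply, hm]; push_cast; ring

lemma weightLattice_eq (n : ℕ) : weightLattice n = Lsub n := by
  apply le_antisymm
  · rw [weightLattice]
    exact AddSubgroup.closure_le _ |>.mpr (fun v hv => hv)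
  · intro v hv
    rcases hv with hv | hv
    · exact AddSubgroup.subset_closure (Or.inl hv)
    · exact AddSubgroup.subset_closure (Or.inr hv)

lemma mem_weightLattice {n : ℕ} {v : Fin n → ℚ} :
    v ∈ weightLattice n ↔ v ∈ intVecs n ∨ v ∈ halfOddVecs n := by
  rw [weightLattice_eq]; rfl

def Fsub (n : ℕ) : AddSubgroup (Fin n → ℚ) where
  carrier := {v | (∀ i, ∃ m : ℤ, v i = 4 * (m : ℚ)) ∨ (∀ i, ∃ m : ℤ, Odd m ∧ v i = 2 * (m : ℚ))}
  zero_mem' := Or.inl fun i => ⟨0, by simp⟩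
  add_mem' := by
    rintro a b (ha | ha) (hb | hb)
    · left; intro i
      obtain ⟨m, hm⟩ := ha i; obtain ⟨k, hk⟩ := hb i
      exact ⟨m + k, by simp only [Pi.add_apply, hm, hk]; push_cast; ring⟩
    · right; intro i
      obtain ⟨m, hm⟩ := ha i; obtain ⟨k, hko, hk⟩ := hb i
      refine ⟨2 * m + k, ?_, ?_⟩
      · obtain ⟨t, ht⟩ := hko; exact ⟨m + t, by omega⟩
      · simp only [Pi.add_apply, hm, hk]; push_cast; ring
    · right; intro i
      obtain ⟨m, hmo, hm⟩ := ha i; obtain ⟨k, hk⟩ := hb i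
      refine ⟨m + 2 * k, ?_, ?_⟩
      · obtain ⟨t, ht⟩ := hmo; exact ⟨t + k, by omega⟩
      · simp only [Pi.add_apply, hm, hk]; push_cast; ring
    · left; intro i
      obtain ⟨m, hmo, hm⟩ := ha i; obtain ⟨k, hko, hk⟩ := hb i
      obtain ⟨t, ht⟩ : Even (m + k) := hmo.add_odd hko
      refine ⟨t, ?_⟩
      simp only [Pi.add_apply, hm, hk]
      have : ((m : ℚ) + k) = ((t : ℚ) + t) := by exact_mod_cast congrArg (Int.cast : ℤ → ℚ) ht
      linarith
  neg_mem' := by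
    rintro a (ha | ha)
    · left; intro i; obtain ⟨m, hm⟩ := ha i
      exact ⟨-m, by simp only [Pi.neg_apply, hm]; push_cast; ring⟩
    · right; intro i; obtain ⟨m, hmo, hm⟩ := ha i
      refine ⟨-m, hmo.neg, ?_⟩
      simp only [Pi.neg_apply, hm]; push_cast; ring

lemma fourL_eq (n : ℕ) : fourL n = Fsub n := by
  have himg : (fun v => (4 : ℚ) • v) '' (weightLattice n : Set (Fin n → ℚ)) = (Fsub n : Set (Fin n → ℚ)) := by
    ext w
    constructor
    · rintro ⟨u, hu, rfl⟩
      rcases mem_weightLattice.mp hu with h | h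
      · left; intro i
        obtain ⟨m, hm⟩ := h i
        exact ⟨m, by simp [Pi.smul_apply, hm]; try ring⟩
      · right; intro i
        obtain ⟨m, hmo, hm⟩ := h i
        refine ⟨m, hmo, by simp [Pi.smul_apply, hm]; try ring⟩
    · intro hw
      refine ⟨(4 : ℚ)⁻¹ • w, ?_, by simp⟩
      rw [SetLike.mem_coe, mem_weightLattice]
      rcases hw with h | h
      · left; intro i
        obtain ⟨m, hm⟩ := h i
        exact ⟨m, by simp [Pi.smul_apply, hm]; try ring⟩
      · right; intro i
        obtain ⟨m, hmo, hm⟩ := h i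
        exact ⟨m, hmo, by simp [Pi.smul_apply, hm]; try ring⟩
  rw [fourL, himg, AddSubgroup.closure_eq]

lemma mem_fourL {n : ℕ} {v : Fin n → ℚ} :
    v ∈ fourL n ↔ (∀ i, ∃ m : ℤ, v i = 4 * (m : ℚ)) ∨ (∀ i, ∃ m : ℤ, Odd m ∧ v i = 2 * (m : ℚ)) := by
  rw [fourL_eq]; rfl

/-- Key separation lemma: two half-odd vectors whose `i`-th numerators are negatives
of each other are distinct mod `4L`. -/
lemma key_sep {n : ℕ} {v w : Fin n → ℚ} {i : Fin n} {a b : ℤ}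
    (hv : v i = (a : ℚ) / 2) (hw : w i = (b : ℚ) / 2) (hab : a = -b) (hodd : Odd a)
    (h : v - w ∈ fourL n) : False := by
  obtain ⟨t, ht⟩ := hodd
  rcases mem_fourL.mp h with h' | h'
  · obtain ⟨m, hm⟩ := h' i
    rw [Pi.sub_apply, hv, hw] at hm
    have : (a : ℚ) = 4 * m := by
      have hba : (b : ℚ) = -(a : ℚ) := by exact_mod_cast congrArg (Int.cast : ℤ → ℚ) (by omega : b = -a)
      rw [hba] at hm; linarith
    have : a = 4 * m := by exact_mod_cast this
    omega
  · obtain ⟨m, hmo, hm⟩ := h' i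
    obtain ⟨s, hs⟩ := hmo
    rw [Pi.sub_apply, hv, hw] at hm
    have : (a : ℚ) = 2 * m := by
      have hba : (b : ℚ) = -(a : ℚ) := by exact_mod_cast congrArg (Int.cast : ℤ → ℚ) (by omega : b = -a)
      rw [hba] at hm; linarith
    have : a = 2 * m := by exact_mod_cast this
    omega

def Isub (n : ℕ) : AddSubgroup (Fin n → ℚ) where
  carrier := {v | ∀ i, ∃ m : ℤ, v i = m}
  zero_mem' := fun i => ⟨0, by simp⟩
  add_mem' := by
    rintro a b ha hb i
    obtain ⟨m, hm⟩ := ha i; obtain ⟨k, hk⟩ := hb i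
    exact ⟨m + k, by simp [Pi.add_apply, hm, hk]⟩
  neg_mem' := by
    rintro a ha i
    obtain ⟨m, hm⟩ := ha i
    exact ⟨-m, by simp [Pi.neg_apply, hm]⟩

/-- Every subset of `L/4L` stable under the signed-permutation group
`W = (ℤ/2ℤ)ⁿ ⋊ Sₙ` that generates `L/4L` has size at least `2ⁿ`, and the set of vectors
with all coordinates `±1/2` is a `W`-stable generating set of `L/4L` of size exactly `2ⁿ`. -/
theorem stmt16 (n : ℕ) (hn : 1 ≤ n) :
    (∀ Ω : Set (Fin n → ℚ), Ω ⊆ (weightLattice n : Set (Fin n → ℚ)) →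
      (∀ v ∈ Ω, ∀ (σ : Equiv.Perm (Fin n)) (ε : Fin n → ℚ),
        (∀ i, ε i = 1 ∨ ε i = -1) →
        ∃ w ∈ Ω, (fun i => ε i * v (σ i)) - w ∈ fourL n) →
      (weightLattice n : Set (Fin n → ℚ)) ⊆
        ↑(AddSubgroup.closure (Ω ∪ (fourL n : Set (Fin n → ℚ)))) →
      ((2 ^ n : ℕ) : ℕ∞) ≤
        ((QuotientAddGroup.mk (s := fourL n)) '' Ω).encard) ∧
    (∀ Ωh : Set (Fin n → ℚ),
      Ωh = {v | ∀ i, v i = 1 / 2 ∨ v i = -(1 / 2)} →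
      Ωh ⊆ (weightLattice n : Set (Fin n → ℚ)) ∧
      (∀ v ∈ Ωh, ∀ (σ : Equiv.Perm (Fin n)) (ε : Fin n → ℚ),
        (∀ i, ε i = 1 ∨ ε i = -1) → (fun i => ε i * v (σ i)) ∈ Ωh) ∧
      (weightLattice n : Set (Fin n → ℚ)) ⊆
        ↑(AddSubgroup.closure (Ωh ∪ (fourL n : Set (Fin n → ℚ)))) ∧
      ((QuotientAddGroup.mk (s := fourL n)) '' Ωh).encard = ((2 ^ n : ℕ) : ℕ∞)) := by
  classical
  constructor
  · -- lower bound
    intro Ω hΩL hstab hgen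
    have hhalf : (fun _ : Fin n => (1/2 : ℚ)) ∈ weightLattice n :=
      mem_weightLattice.mpr (Or.inr fun i => ⟨1, odd_one, by norm_num⟩)
    -- Ω contains a half-odd vector
    have hexists : ∃ v ∈ Ω, v ∈ halfOddVecs n := by
      by_contra hc
      push_neg at hc
      have hΩint : Ω ⊆ intVecs n := by
        intro v hv
        rcases mem_weightLattice.mp (hΩL hv) with h | h
        · exact h
        · exact absurd h (hc v hv)
      have hIle : AddSubgroup.closure (Ω ∪ (fourL n : Set (Fin n → ℚ))) ≤ Isub n := by
        rw [AddSubgroup.closure_le]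
        rintro v (hv | hv)
        · exact hΩint hv
        · rcases mem_fourL.mp hv with h | h
          · intro i; obtain ⟨m, hm⟩ := h i
            exact ⟨4 * m, by rw [hm]; push_cast; ring⟩
          · intro i; obtain ⟨m, _, hm⟩ := h i
            exact ⟨2 * m, by rw [hm]; push_cast; ring⟩
      obtain ⟨m, hm⟩ := hIle (hgen hhalf) ⟨0, hn⟩
      have h1 : (2 * m : ℚ) = 1 := by rw [← hm]; norm_num
      have h2 : (2 * m : ℤ) = 1 := by exact_mod_cast h1
      omega
    obtain ⟨v, hvΩ, hvHO⟩ := hexists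
    choose a ha using hvHO
    -- for each sign pattern get an element of Ω
    have hkey : ∀ b : Fin n → Bool,
        ∃ w ∈ Ω, (fun i => (if b i then (1:ℚ) else -1) * v i) - w ∈ fourL n := by
      intro b
      have := hstab v hvΩ (Equiv.refl _) (fun i => if b i then 1 else -1)
        (fun i => by by_cases h : b i <;> simp [h])
      simpa using this
    choose w hwΩ hw4 using hkey
    set f : (Fin n → Bool) → ((Fin n → ℚ) ⧸ fourL n) :=
      fun b => QuotientAddGroup.mk (s := fourL n) (w b) with hf
    have hinj : Function.Injective f := by
      intro b b' hbb
      by_contra hne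
      obtain ⟨i, hi⟩ := Function.ne_iff.mp hne
      have h3 : -(w b) + w b' ∈ fourL n := QuotientAddGroup.eq.mp hbb
      have hmem : (fun i => (if b i then (1:ℚ) else -1) * v i)
          - (fun i => (if b' i then (1:ℚ) else -1) * v i) ∈ fourL n := by
        have heq : (fun i => (if b i then (1:ℚ) else -1) * v i)
            - (fun i => (if b' i then (1:ℚ) else -1) * v i)
            = ((fun i => (if b i then (1:ℚ) else -1) * v i) - w b)
              - ((fun i => (if b' i then (1:ℚ) else -1) * v i) - w b')
              - (-(w b) + w b') := by
          funext j
          simp only [Pi.sub_apply, Pi.add_apply, Pi.neg_apply]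
          ring
        rw [heq]
        exact sub_mem (sub_mem (hw4 b) (hw4 b')) h3
      cases hb : b i <;> cases hb' : b' i
      · exact hi (by rw [hb, hb'])
      · refine key_sep (i := i) (a := -(a i)) (b := a i) ?_ ?_ (by ring) (ha i).1.neg hmem
        · simp only [hb, if_false, (ha i).2]; push_cast; ring
        · simp only [hb', if_true, (ha i).2]; ring
      · refine key_sep (i := i) (a := a i) (b := -(a i)) ?_ ?_ (by ring) (ha i).1 hmem
        · simp only [hb, if_true, (ha i).2]; ring
        · simp only [hb', if_false, (ha i).2]; push_cast; ring
      · exact hi (by rw [hb, hb'])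
    have hsub : Set.range f ⊆ (QuotientAddGroup.mk (s := fourL n)) '' Ω := by
      rintro _ ⟨b, rfl⟩
      exact ⟨w b, hwΩ b, rfl⟩
    calc ((2 ^ n : ℕ) : ℕ∞) = (Set.univ : Set (Fin n → Bool)).encard := by
          rw [Set.encard_univ, ENat.card_eq_coe_fintype_card]
          norm_num
      _ = (Set.range f).encard := by rw [← Set.image_univ, hinj.encard_image]
      _ ≤ _ := Set.encard_le_encard hsub
  · -- the explicit generating set
    intro Ωh hΩh
    subst hΩh
    refine ⟨?_, ?_, ?_, ?_⟩
    · intro u hu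
      rw [SetLike.mem_coe, mem_weightLattice]
      right; intro i
      rcases hu i with h | h
      · exact ⟨1, odd_one, by rw [h]; norm_num⟩
      · exact ⟨-1, ⟨-1, by ring⟩, by rw [h]; push_cast; ring⟩
    · intro u hu σ ε hε
      intro i
      rcases hε i with h | h <;> rcases hu (σ i) with h' | h' <;>
        simp [h, h']
    · -- generation
      set C := AddSubgroup.closure
        ({v : Fin n → ℚ | ∀ i, v i = 1/2 ∨ v i = -(1/2)} ∪ (fourL n : Set (Fin n → ℚ))) with hC
      have h1 : (fun _ : Fin n => (1/2 : ℚ)) ∈ C :=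
        AddSubgroup.subset_closure (Or.inl fun j => Or.inl rfl)
      have hsingle : ∀ i : Fin n, Pi.single i (1:ℚ) ∈ C := by
        intro i
        have h2 : (fun j => if j = i then -(1/2:ℚ) else 1/2) ∈ C :=
          AddSubgroup.subset_closure (Or.inl fun j => by by_cases h : j = i <;> simp [h])
        have heq : Pi.single i (1:ℚ)
            = (fun _ => (1/2:ℚ)) - (fun j => if j = i then -(1/2:ℚ) else 1/2) := by
          funext j
          by_cases h : j = i
          · subst h; simp; norm_num
          · simp [h, Pi.single_eq_of_ne h]
        rw [heq]
        exact sub_mem h1 h2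
      have hint : ∀ u ∈ intVecs n, u ∈ C := by
        intro u hu
        have heq : u = ∑ i, Pi.single i (u i) := (Finset.univ_sum_single u).symm
        rw [heq]
        refine sum_mem fun i _ => ?_
        obtain ⟨m, hm⟩ := hu i
        have heq2 : Pi.single i (u i) = (m • Pi.single i (1:ℚ) : Fin n → ℚ) := by
          funext j
          by_cases h : j = i
          · subst h; simp [hm]
          · simp [h, Pi.single_eq_of_ne h]
        rw [heq2]
        exact zsmul_mem (hsingle i) m
      intro u hu
      rcases mem_weightLattice.mp hu with h | h
      · exact hint u h
      · have heq : u = (fun _ : Fin n => (1/2:ℚ)) + (u - fun _ : Fin n => (1/2:ℚ)) := by abel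
        rw [heq]
        refine add_mem h1 (hint _ fun i => ?_)
        obtain ⟨m, hmo, hm⟩ := h i
        obtain ⟨t, ht⟩ := hmo
        refine ⟨t, ?_⟩
        have hmt : (m : ℚ) = 2 * t + 1 := by exact_mod_cast (by omega : m = 2 * t + 1)
        simp only [Pi.sub_apply, hm, hmt]
        ring
    · -- cardinality
      set e : (Fin n → Bool) → (Fin n → ℚ) := fun b i => if b i then 1/2 else -(1/2) with he
      have hrange : {v : Fin n → ℚ | ∀ i, v i = 1/2 ∨ v i = -(1/2)} = Set.range e := by
        ext u
        constructor
        · intro hu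
          refine ⟨fun i => decide (u i = 1/2), ?_⟩
          funext i
          by_cases h : u i = 1/2
          · simp [he, h]
          · rcases hu i with h' | h'
            · exact absurd h' h
            · simp only [he]
              rw [if_neg (by simp only [decide_eq_true_eq]; exact h)]
              exact h'.symm
        · rintro ⟨b, rfl⟩ i
          by_cases h : b i <;> simp [he, h]
      have hinj2 : Function.Injective
          (fun b => QuotientAddGroup.mk (s := fourL n) (e b)) := by
        intro b b' hbb
        by_contra hne
        obtain ⟨i, hi⟩ := Function.ne_iff.mp hne
        have h3 : -(e b) + e b' ∈ fourL n := QuotientAddGroup.eq.mp hbb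
        have hmem : e b - e b' ∈ fourL n := by
          have heq : e b - e b' = -(-(e b) + e b') := by abel
          rw [heq]; exact neg_mem h3
        cases hb : b i <;> cases hb' : b' i
        · exact hi (by rw [hb, hb'])
        · refine key_sep (i := i) (a := (-1 : ℤ)) (b := 1) ?_ ?_ (by ring) ⟨-1, by ring⟩ hmem
          · simp [he, hb]; try ring
          · simp [he, hb']; try ring
        · refine key_sep (i := i) (a := (1 : ℤ)) (b := -1) ?_ ?_ (by ring) odd_one hmem
          · simp [he, hb]; try ring
          · simp [he, hb']; try ring
        · exact hi (by rw [hb, hb'])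
      have himg : (QuotientAddGroup.mk (s := fourL n)) '' {v : Fin n → ℚ | ∀ i, v i = 1/2 ∨ v i = -(1/2)}
          = Set.range (fun b => QuotientAddGroup.mk (s := fourL n) (e b)) := by
        rw [hrange, ← Set.range_comp]
        rfl
      rw [himg, ← Set.image_univ, hinj2.encard_image, Set.encard_univ,
        ENat.card_eq_coe_fintype_card]
      norm_num
end
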